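/- arXiv:2402.05724 — 6 statements merged into one kernel-verified Lean document; each statement's English description precedes it below -/
import Mathlib

section
/- For any finite sets S, A, S', any model class 𝓜 of transition kernels P_M : S × A × Δ(S) → Δ(S'), any ε > 0, and any mapping ν : 𝓜 → Δ(S), every sequence of pairs in S × A that is partially ε-independent with respect to 𝓜 and ν has pairwise distinct elements, and hence its length is at most |S|·|A|. In particular dim_{E|ν}(𝓜, ε) ≤ |S|·|A| for every such mapping ν, so the partial model-based Eluder dimension of any tabular mean-field model class is at most |S|·|A|. -/
/-- A pair `(s,a)` together with models `M₁, M₂` witnesses partial `ε`-independence of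
the `i`-th element of `seq` from its predecessors, with respect to the model class
(indexed by the type `M`, with kernels `P`) and the mapping `ν`. -/
def PartIndepSeq {S A S' M : Type*} [Fintype S'] (P : M → S → A → (S → ℝ) → S' → ℝ)
    (ε : ℝ) (ν : M → S → ℝ) {n : ℕ} (seq : Fin n → S × A) : Prop :=
  ∀ i : Fin n, ∃ M₁ M₂ : M,
    (∑ t ∈ Finset.Iio i,
        (∑ s', |P M₁ (seq t).1 (seq t).2 (ν M₁) s' - P M₂ (seq t).1 (seq t).2 (ν M₂) s'|) ^ 2)
      ≤ ε ^ 2 ∧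
    ε < ∑ s', |P M₁ (seq i).1 (seq i).2 (ν M₁) s' - P M₂ (seq i).1 (seq i).2 (ν M₂) s'|

/-- For any finite `S`, `A`, `S'`, any model class of transition kernels
`P : S × A × Δ(S) → Δ(S')`, any `ε > 0` and any mapping `ν : 𝓜 → Δ(S)`, every partially
`ε`-independent sequence of pairs in `S × A` has pairwise distinct elements, and hence its
length is at most `|S|·|A|`; in particular `dim_{E|ν}(𝓜,ε) ≤ |S|·|A|`. -/
theorem tabular_partial_eluder_bound {S A S' M : Type*} [Fintype S] [Fintype A] [Fintype S']
    (P : M → S → A → (S → ℝ) → S' → ℝ)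
    (hP : ∀ (m : M) (s : S) (a : A) (μ : S → ℝ), μ ∈ stdSimplex ℝ S →
      P m s a μ ∈ stdSimplex ℝ S')
    (ε : ℝ) (hε : 0 < ε)
    (ν : M → S → ℝ) (hν : ∀ m : M, ν m ∈ stdSimplex ℝ S)
    {n : ℕ} (seq : Fin n → S × A) (hseq : PartIndepSeq P ε ν seq) :
    Function.Injective seq ∧ n ≤ Fintype.card S * Fintype.card A := by
  have hinj : Function.Injective seq := by
    intro i j hij
    by_contra hne
    wlog hlt : i < j generalizing i j
    · exact this hij.symm (Ne.symm hne) (lt_of_le_of_ne (not_lt.mp hlt) (by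
        exact fun h => hne (h.symm ▸ rfl)))
    obtain ⟨M₁, M₂, h1, h2⟩ := hseq j
    have hmem : i ∈ Finset.Iio j := Finset.mem_Iio.mpr hlt
    have hterm : (∑ s', |P M₁ (seq i).1 (seq i).2 (ν M₁) s'
        - P M₂ (seq i).1 (seq i).2 (ν M₂) s'|) ^ 2
        ≤ ∑ t ∈ Finset.Iio j,
          (∑ s', |P M₁ (seq t).1 (seq t).2 (ν M₁) s'
            - P M₂ (seq t).1 (seq t).2 (ν M₂) s'|) ^ 2 :=
      Finset.single_le_sum (f := fun t => (∑ s', |P M₁ (seq t).1 (seq t).2 (ν M₁) s' - P M₂ (seq t).1 (seq t).2 (ν M₂) s'|) ^ 2) (fun t _ => sq_nonneg _) hmem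
    rw [hij] at hterm
    have : ε ^ 2 < ε ^ 2 := lt_of_lt_of_le (lt_of_lt_of_le
      (pow_lt_pow_left₀ h2 hε.le two_ne_zero) (hterm.trans h1)) le_rfl
    exact lt_irrefl _ this
  refine ⟨hinj, ?_⟩
  calc n = Fintype.card (Fin n) := (Fintype.card_fin n).symm
    _ ≤ Fintype.card (S × A) := Fintype.card_le_of_injective seq hinj
    _ = Fintype.card S * Fintype.card A := Fintype.card_prod S A
end

section
/- Let S be a finite set with |S| = d ≥ 2, let A be a nonempty finite set, let L_T > 0 and 0 < ε ≤ 1/4 with 5ε ≤ L_T. Set ζ := ⌊L_T/(5ε)⌋ and let 𝓝_ζ := {μ ∈ Δ(S) : ζ·μ(s) ∈ ℤ for every s ∈ S}. For μ ∈ 𝓝_ζ define the kernel P_μ : S × A × Δ(S) → Δ({t₁,t₂}) by P_μ(t₁|s,a,ν) := 1/2 + 2ε·max{1 − (L_T/(4ε))·‖ν−μ‖₁, 0} and P_μ(t₂|s,a,ν) := 1 − P_μ(t₁|s,a,ν), and let 𝓜 := {P_μ : μ ∈ 𝓝_ζ}. Then: (i) |𝓝_ζ| = C(ζ+d−1, d−1)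 (binomial coefficient); (ii) any two distinct μ, μ' ∈ 𝓝_ζ satisfy ‖μ − μ'‖₁ ≥ 2/ζ; (iii) for any fixed (s,a) ∈ S×A and any enumeration μ¹, …, μ^N of 𝓝_ζ (N = |𝓝_ζ|), the sequence ((s,a,μ^i))_{i=1}^{N−1} is ε-independent with respect to 𝓜; consequently dim_E(𝓜, ε) ≥ C(ζ+d−1, d−1) − 1, which is exponential in |S| when L_T/ε is proportional to |S|. -/
/-!
The grid points `μ ∈ 𝓝_ζ` are the compositions of `ζ` into `d` parts scaled by `1/ζ`, which
stars and bars counts. Two distinct grid points differ by at least `1/ζ` in some coordinate,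
and since both have mass one the rest of the ℓ1 distance is at least as large again. The choice
`ζ ≤ L_T/(5ε)` makes this separation `2/ζ` exceed the radius `4ε/L_T` of the tent in `P_μ`, so
`P_μ` and `P_μ'` agree at every grid point other than `μ` and `μ'`, while at `μ` they are
`4ε > ε` apart. Pairing the `i`-th point of an enumeration with its last point therefore
witnesses the `ε`-independence of the `i`-th point from all its predecessors.
-/

open Finset

lemma two_mul_abs_sub_le_sum_abs_sub {S : Type*} [Fintype S] {μ μ' : S → ℝ}
    (h : ∑ s, μ s = ∑ s, μ' s) (s₀ : S) :
    2 * |μ s₀ - μ' s₀| ≤ ∑ s, |μ s - μ' s| := by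
  classical
  have hrest : μ s₀ - μ' s₀ = -∑ s ∈ univ.erase s₀, (μ s - μ' s) := by
    rw [sum_erase_eq_sub (mem_univ s₀), sum_sub_distrib, h]
    ring
  calc 2 * |μ s₀ - μ' s₀|
      = |μ s₀ - μ' s₀| + |∑ s ∈ univ.erase s₀, (μ s - μ' s)| := by
        rw [two_mul, ← abs_neg (∑ s ∈ _, _), ← hrest]
    _ ≤ |μ s₀ - μ' s₀| + ∑ s ∈ univ.erase s₀, |μ s - μ' s| := by
        gcongr; exact abs_sum_le_sum_abs _ _
    _ = ∑ s, |μ s - μ' s| := add_sum_erase _ (fun s => |μ s - μ' s|) (mem_univ s₀)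

def simplexGrid (S : Type*) [Fintype S] (n : ℕ) : Set (S → ℝ) :=
  {μ | μ ∈ stdSimplex ℝ S ∧ ∀ s, ∃ k : ℕ, (n : ℝ) * μ s = k}

namespace simplexGrid

variable {S : Type*} [Fintype S] {n : ℕ}

noncomputable def ofComposition (n : ℕ) (f : {f : S → ℕ // ∑ s, f s = n}) : S → ℝ :=
  fun s => (f.1 s : ℝ) / n

lemma ofComposition_injective (hn : n ≠ 0) :
    Function.Injective (ofComposition (S := S) n) := by
  intro f g h
  ext s
  have := congrFun h s
  simp only [ofComposition] at this
  exact_mod_cast (div_left_inj' (Nat.cast_ne_zero.mpr hn)).mp this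

lemma range_ofComposition (hn : n ≠ 0) :
    Set.range (ofComposition (S := S) n) = simplexGrid S n := by
  have hn' : (n : ℝ) ≠ 0 := Nat.cast_ne_zero.mpr hn
  ext μ
  constructor
  · rintro ⟨f, rfl⟩
    refine ⟨⟨fun s => by unfold ofComposition; positivity, ?_⟩,
      fun s => ⟨f.1 s, mul_div_cancel₀ _ hn'⟩⟩
    simp only [ofComposition]
    rw [← sum_div, div_eq_one_iff_eq hn']
    exact_mod_cast f.2
  · rintro ⟨⟨-, hsum⟩, hk⟩
    choose k hk using hk
    have hμ : ∀ s, μ s = k s / n := fun s => by rw [← hk s, mul_div_cancel_left₀ _ hn']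
    refine ⟨⟨k, ?_⟩, funext fun s => (hμ s).symm⟩
    have : ((∑ s, k s : ℕ) : ℝ) = n := by
      simp only [Nat.cast_sum, ← hk, ← mul_sum, hsum, mul_one]
    exact_mod_cast this

lemma card_composition [Nonempty S] :
    Nat.card {f : S → ℕ // ∑ s, f s = n} =
      (n + Fintype.card S - 1).choose (Fintype.card S - 1) := by
  classical
  have hS : 1 ≤ Fintype.card S := Fintype.card_pos
  rw [← Nat.card_congr (Sym.equivNatSumOfFintype S n), Nat.card_eq_fintype_card,
    Sym.card_sym_eq_choose, add_comm, ← Nat.choose_symm (by omega)]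
  congr 1
  omega

lemma exists_enum [Nonempty S] (hn : n ≠ 0) :
    ∃ e : Fin ((n + Fintype.card S - 1).choose (Fintype.card S - 1)) → S → ℝ,
      Function.Injective e ∧ Set.range e = simplexGrid S n := by
  classical
  have : Finite {f : S → ℕ // ∑ s, f s = n} := .of_equiv _ (Sym.equivNatSumOfFintype S n)
  let σ := Finite.equivFinOfCardEq (card_composition (S := S) (n := n))
  refine ⟨ofComposition n ∘ σ.symm, (ofComposition_injective hn).comp σ.symm.injective, ?_⟩
  rw [Set.range_comp, σ.symm.range_eq_univ, Set.image_univ, range_ofComposition hn]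

lemma ncard [Nonempty S] (hn : n ≠ 0) :
    (simplexGrid S n).ncard = (n + Fintype.card S - 1).choose (Fintype.card S - 1) := by
  obtain ⟨e, he, hrange⟩ := exists_enum (S := S) hn
  rw [← hrange, Set.ncard_range_of_injective he, Nat.card_fin]

variable {μ μ' : S → ℝ}

lemma inv_le_abs_sub (hμ : μ ∈ simplexGrid S n) (hμ' : μ' ∈ simplexGrid S n) {s : S}
    (hs : μ s ≠ μ' s) : (n : ℝ)⁻¹ ≤ |μ s - μ' s| := by
  obtain rfl | hn := eq_or_ne n 0
  · simp
  obtain ⟨k, hk⟩ := hμ.2 s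
  obtain ⟨k', hk'⟩ := hμ'.2 s
  have hn' : (0 : ℝ) < n := by positivity
  have hkk : (k : ℤ) ≠ k' := by
    intro h
    apply hs
    apply mul_left_cancel₀ hn'.ne'
    rw [hk, hk']
    exact_mod_cast h
  have hgap : (1 : ℝ) ≤ |(k : ℝ) - k'| := by
    exact_mod_cast Int.one_le_abs (sub_ne_zero.mpr hkk)
  rw [inv_le_iff_one_le_mul₀ hn', ← abs_of_pos hn', ← abs_mul, mul_comm, mul_sub, hk, hk']
  exact hgap

lemma two_div_le_sum_abs_sub (hμ : μ ∈ simplexGrid S n) (hμ' : μ' ∈ simplexGrid S n)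
    (hne : μ ≠ μ') : 2 / (n : ℝ) ≤ ∑ s, |μ s - μ' s| := by
  obtain ⟨s, hs⟩ := Function.ne_iff.mp hne
  calc 2 / (n : ℝ) = 2 * (n : ℝ)⁻¹ := div_eq_mul_inv _ _
    _ ≤ 2 * |μ s - μ' s| := by gcongr; exact inv_le_abs_sub hμ hμ' hs
    _ ≤ ∑ s, |μ s - μ' s| := two_mul_abs_sub_le_sum_abs_sub (by rw [hμ.1.2, hμ'.1.2]) s

end simplexGrid

noncomputable def tent {S : Type*} [Fintype S] (c : ℝ) (μ ν : S → ℝ) : ℝ :=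
  max (1 - c * ∑ x, |ν x - μ x|) 0

section tent

variable {S : Type*} [Fintype S] {c : ℝ} {μ ν : S → ℝ}

@[simp]
lemma tent_self : tent c μ μ = 1 := by
  simp [tent]

lemma tent_eq_zero (h : 1 ≤ c * ∑ x, |ν x - μ x|) : tent c μ ν = 0 :=
  max_eq_right (by linarith)

lemma tent_eq_zero_of_mem_simplexGrid {n : ℕ} (hn : n ≠ 0) (hc : (n : ℝ) ≤ 2 * c)
    (hμ : μ ∈ simplexGrid S n) (hν : ν ∈ simplexGrid S n) (hne : μ ≠ ν) : tent c μ ν = 0 := by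
  have hn' : (0 : ℝ) < n := by positivity
  apply tent_eq_zero
  calc (1 : ℝ) = n / 2 * (2 / n) := by field_simp
    _ ≤ c * ∑ x, |ν x - μ x| :=
      mul_le_mul (by linarith) (simplexGrid.two_div_le_sum_abs_sub hν hμ hne.symm)
        (by positivity) (by linarith)

end tent

/-- `ε`-independence of a sequence with respect to the model class `{P μ | μ ∈ 𝓜}`. -/
def IsEpsIndependent {Θ S A X Y : Type*} [Fintype Y] (𝓜 : Set Θ) (P : Θ → S → A → X → Y → ℝ)
    (ε : ℝ) {n : ℕ} (seq : Fin n → S × A × X) : Prop :=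
  ∀ i, ∃ μ ∈ 𝓜, ∃ μ' ∈ 𝓜,
    (∑ t ∈ Iio i, (∑ y, |P μ (seq t).1 (seq t).2.1 (seq t).2.2 y
      - P μ' (seq t).1 (seq t).2.1 (seq t).2.2 y|) ^ 2) ≤ ε ^ 2 ∧
    ε < ∑ y, |P μ (seq i).1 (seq i).2.1 (seq i).2.2 y - P μ' (seq i).1 (seq i).2.1 (seq i).2.2 y|

section HardKernel

variable {S A : Type*} [Fintype S] {ε c : ℝ} {P : (S → ℝ) → S → A → (S → ℝ) → Fin 2 → ℝ}

lemma sum_abs_sub_eq_tent (hε : 0 ≤ ε)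
    (hP0 : ∀ μ s a ν, P μ s a ν 0 = 1 / 2 + 2 * ε * tent c μ ν)
    (hP1 : ∀ μ s a ν, P μ s a ν 1 = 1 - P μ s a ν 0) (μ μ' : S → ℝ) (s : S) (a : A)
    (ν : S → ℝ) :
    ∑ y, |P μ s a ν y - P μ' s a ν y| = 4 * ε * |tent c μ ν - tent c μ' ν| := by
  have h0 : P μ s a ν 0 - P μ' s a ν 0 = 2 * ε * (tent c μ ν - tent c μ' ν) := by
    rw [hP0, hP0]; ring
  have h1 : P μ s a ν 1 - P μ' s a ν 1 = -(2 * ε * (tent c μ ν - tent c μ' ν)) := by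
    rw [hP1, hP1, ← h0]; ring
  rw [Fin.sum_univ_two, h0, h1, abs_neg, abs_mul, abs_of_nonneg (by positivity : 0 ≤ 2 * ε)]
  ring

lemma isEpsIndependent_of_injective (hε : 0 < ε)
    (hP0 : ∀ μ s a ν, P μ s a ν 0 = 1 / 2 + 2 * ε * tent c μ ν)
    (hP1 : ∀ μ s a ν, P μ s a ν 1 = 1 - P μ s a ν 0) {𝓝 : Set (S → ℝ)}
    (hsep : ∀ μ ∈ 𝓝, ∀ ν ∈ 𝓝, μ ≠ ν → tent c μ ν = 0) {n : ℕ} {ν : Fin n → S → ℝ}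
    (hν : Function.Injective ν) (hν𝓝 : ∀ t, ν t ∈ 𝓝) {μ' : S → ℝ} (hμ' : μ' ∈ 𝓝)
    (hμ'ν : ∀ t, ν t ≠ μ') (s : S) (a : A) :
    IsEpsIndependent 𝓝 P ε (fun t => (s, a, ν t)) := by
  intro i
  refine ⟨ν i, hν𝓝 i, μ', hμ', ?_, ?_⟩
  · have hzero : ∀ t ∈ Iio i, (∑ y, |P (ν i) s a (ν t) y - P μ' s a (ν t) y|) ^ 2 = 0 := by
      intro t ht
      rw [sum_abs_sub_eq_tent hε.le hP0 hP1,
        hsep _ (hν𝓝 i) _ (hν𝓝 t) (hν.ne (mem_Iio.mp ht).ne'),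
        hsep _ hμ' _ (hν𝓝 t) (hμ'ν t).symm]
      simp
    rw [sum_eq_zero hzero]
    positivity
  · rw [sum_abs_sub_eq_tent hε.le hP0 hP1, tent_self, hsep _ hμ' _ (hν𝓝 i) (hμ'ν i).symm,
      sub_zero, abs_one, mul_one]
    linarith

lemma isEpsIndependent_of_enum (hε : 0 < ε)
    (hP0 : ∀ μ s a ν, P μ s a ν 0 = 1 / 2 + 2 * ε * tent c μ ν)
    (hP1 : ∀ μ s a ν, P μ s a ν 1 = 1 - P μ s a ν 0) {𝓝 : Set (S → ℝ)}
    (hsep : ∀ μ ∈ 𝓝, ∀ ν ∈ 𝓝, μ ≠ ν → tent c μ ν = 0) {N : ℕ} {e : Fin N → S → ℝ}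
    (he : Function.Injective e) (he𝓝 : ∀ j, e j ∈ 𝓝) (s : S) (a : A) :
    IsEpsIndependent 𝓝 P ε (fun t : Fin (N - 1) => (s, a, e (Fin.castLE (N.sub_le 1) t))) := by
  rcases N with _ | N
  · exact fun i => i.elim0
  exact isEpsIndependent_of_injective hε hP0 hP1 hsep (he.comp (Fin.castLE_injective _))
    (fun t => he𝓝 _) (he𝓝 (Fin.last N)) (fun t h => by
      have := congrArg Fin.val (he h)
      simp only [Fin.val_castLE, Fin.val_last] at this
      omega) s a

end HardKernel

theorem MFC_lower_bound_construction_general {S A : Type*} [Fintype S] [Nonempty A]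
    (d : ℕ) (hd : 2 ≤ d) (hcard : Fintype.card S = d)
    (L_T ε : ℝ) (hL : 0 < L_T) (hε : 0 < ε) (hεL : 5 * ε ≤ L_T)
    (ζ : ℕ) (hζ : ζ = ⌊L_T / (5 * ε)⌋₊)
    (𝓝 : Set (S → ℝ))
    (h𝓝 : 𝓝 = {μ | μ ∈ stdSimplex ℝ S ∧ ∀ s, ∃ k : ℕ, (ζ : ℝ) * μ s = k})
    (P : (S → ℝ) → S → A → (S → ℝ) → Fin 2 → ℝ)
    (hP0 : ∀ μ s a ν, P μ s a ν 0 =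
      1 / 2 + 2 * ε * max (1 - L_T / (4 * ε) * ∑ x, |ν x - μ x|) 0)
    (hP1 : ∀ μ s a ν, P μ s a ν 1 = 1 - P μ s a ν 0) :
    -- (i) cardinality of the grid
    𝓝.ncard = (ζ + d - 1).choose (d - 1) ∧
    -- (ii) ℓ1 separation of distinct grid points
    (∀ μ ∈ 𝓝, ∀ μ' ∈ 𝓝, μ ≠ μ' → 2 / (ζ : ℝ) ≤ ∑ s, |μ s - μ' s|) ∧
    -- (iii) ε-independence of the enumerated sequence
    (∀ (s : S) (a : A) (Nn : ℕ) (e : Fin Nn → (S → ℝ)),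
      Function.Injective e → Set.range e = 𝓝 →
      ∀ i : Fin (Nn - 1), ∃ μ ∈ 𝓝, ∃ μ' ∈ 𝓝,
        (∑ t ∈ Finset.Iio i,
            (∑ x : Fin 2, |P μ s a (e (Fin.castLE (Nat.sub_le Nn 1) t)) x
              - P μ' s a (e (Fin.castLE (Nat.sub_le Nn 1) t)) x|) ^ 2) ≤ ε ^ 2 ∧
        ε < ∑ x : Fin 2, |P μ s a (e (Fin.castLE (Nat.sub_le Nn 1) i)) x
              - P μ' s a (e (Fin.castLE (Nat.sub_le Nn 1) i)) x|) ∧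
    -- consequently: an ε-independent sequence of length `C(ζ+d−1,d−1) − 1` exists
    (∃ seq : Fin ((ζ + d - 1).choose (d - 1) - 1) → S × A × (S → ℝ),
      (∀ i, (seq i).2.2 ∈ stdSimplex ℝ S) ∧
      ∀ i, ∃ μ ∈ 𝓝, ∃ μ' ∈ 𝓝,
        (∑ t ∈ Finset.Iio i,
            (∑ x : Fin 2, |P μ (seq t).1 (seq t).2.1 (seq t).2.2 x
              - P μ' (seq t).1 (seq t).2.1 (seq t).2.2 x|) ^ 2) ≤ ε ^ 2 ∧
        ε < ∑ x : Fin 2, |P μ (seq i).1 (seq i).2.1 (seq i).2.2 x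
              - P μ' (seq i).1 (seq i).2.1 (seq i).2.2 x|) := by
  subst hcard
  have : Nonempty S := Fintype.card_pos_iff.mp (by omega)
  replace h𝓝 : 𝓝 = simplexGrid S ζ := h𝓝
  subst h𝓝
  have hζ0 : ζ ≠ 0 := by
    rw [hζ, ← Nat.one_le_iff_ne_zero, Nat.one_le_floor_iff, one_le_div (by positivity)]
    exact hεL
  have hζc : (ζ : ℝ) ≤ 2 * (L_T / (4 * ε)) :=
    calc (ζ : ℝ) ≤ L_T / (5 * ε) := hζ ▸ Nat.floor_le (by positivity)
      _ ≤ L_T / (2 * ε) := div_le_div_of_nonneg_left hL.le (by positivity) (by linarith)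
      _ = 2 * (L_T / (4 * ε)) := by field_simp; ring
  have hsep : ∀ μ ∈ simplexGrid S ζ, ∀ ν ∈ simplexGrid S ζ, μ ≠ ν →
      tent (L_T / (4 * ε)) μ ν = 0 :=
    fun _ hμ _ hν => tent_eq_zero_of_mem_simplexGrid hζ0 hζc hμ hν
  have hindep (s : S) (a : A) (N : ℕ) (e : Fin N → S → ℝ) (he : Function.Injective e)
      (hrange : Set.range e = simplexGrid S ζ) :=
    isEpsIndependent_of_enum hε hP0 hP1 hsep he (fun j => hrange ▸ ⟨j, rfl⟩) s a
  obtain ⟨e, he, hrange⟩ := simplexGrid.exists_enum (S := S) hζ0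
  refine ⟨simplexGrid.ncard hζ0, fun _ hμ _ hμ' => simplexGrid.two_div_le_sum_abs_sub hμ hμ',
    hindep,
    fun t => (Classical.arbitrary S, Classical.arbitrary A, e (Fin.castLE (Nat.sub_le _ 1) t)),
    fun i => (hrange ▸ ⟨_, rfl⟩ : _ ∈ simplexGrid S ζ).1, hindep _ _ _ e he hrange⟩

/-- The hard tabular mean-field model class: for `ζ := ⌊L_T/(5ε)⌋` and the
grid `𝓝_ζ` of densities with resolution `1/ζ`, the class `𝓜 = {P_μ : μ ∈ 𝓝_ζ}` of kernels
`P_μ(t₁|s,a,ν) = 1/2 + 2ε·[1 − (L_T/(4ε))·‖ν−μ‖₁]⁺` satisfies: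
(i) `|𝓝_ζ| = C(ζ+d−1, d−1)`;
(ii) distinct grid points are ℓ1-separated by at least `2/ζ`;
(iii) for any `(s,a)` and any enumeration of `𝓝_ζ`, the first `N−1` points give an
ε-independent sequence with respect to `𝓜`; consequently there is an ε-independent
sequence of length `C(ζ+d−1,d−1) − 1`, so `dim_E(𝓜,ε) ≥ C(ζ+d−1,d−1) − 1`. -/
theorem MFC_lower_bound_construction {S A : Type*} [Fintype S] [Fintype A] [Nonempty A]
    (d : ℕ) (hd : 2 ≤ d) (hcard : Fintype.card S = d)
    (L_T ε : ℝ) (hL : 0 < L_T) (hε : 0 < ε) (hε4 : ε ≤ 1 / 4) (hεL : 5 * ε ≤ L_T)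
    (ζ : ℕ) (hζ : ζ = ⌊L_T / (5 * ε)⌋₊)
    (𝓝 : Set (S → ℝ))
    (h𝓝 : 𝓝 = {μ | μ ∈ stdSimplex ℝ S ∧ ∀ s, ∃ k : ℕ, (ζ : ℝ) * μ s = k})
    (P : (S → ℝ) → S → A → (S → ℝ) → Fin 2 → ℝ)
    (hP0 : ∀ μ s a ν, P μ s a ν 0 =
      1 / 2 + 2 * ε * max (1 - L_T / (4 * ε) * ∑ x, |ν x - μ x|) 0)
    (hP1 : ∀ μ s a ν, P μ s a ν 1 = 1 - P μ s a ν 0) :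
    -- (i) cardinality of the grid
    𝓝.ncard = (ζ + d - 1).choose (d - 1) ∧
    -- (ii) ℓ1 separation of distinct grid points
    (∀ μ ∈ 𝓝, ∀ μ' ∈ 𝓝, μ ≠ μ' → 2 / (ζ : ℝ) ≤ ∑ s, |μ s - μ' s|) ∧
    -- (iii) ε-independence of the enumerated sequence
    (∀ (s : S) (a : A) (Nn : ℕ) (e : Fin Nn → (S → ℝ)),
      Function.Injective e → Set.range e = 𝓝 →
      ∀ i : Fin (Nn - 1), ∃ μ ∈ 𝓝, ∃ μ' ∈ 𝓝,
        (∑ t ∈ Finset.Iio i,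
            (∑ x : Fin 2, |P μ s a (e (Fin.castLE (Nat.sub_le Nn 1) t)) x
              - P μ' s a (e (Fin.castLE (Nat.sub_le Nn 1) t)) x|) ^ 2) ≤ ε ^ 2 ∧
        ε < ∑ x : Fin 2, |P μ s a (e (Fin.castLE (Nat.sub_le Nn 1) i)) x
              - P μ' s a (e (Fin.castLE (Nat.sub_le Nn 1) i)) x|) ∧
    -- consequently: an ε-independent sequence of length `C(ζ+d−1,d−1) − 1` exists
    (∃ seq : Fin ((ζ + d - 1).choose (d - 1) - 1) → S × A × (S → ℝ),
      (∀ i, (seq i).2.2 ∈ stdSimplex ℝ S) ∧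
      ∀ i, ∃ μ ∈ 𝓝, ∃ μ' ∈ 𝓝,
        (∑ t ∈ Finset.Iio i,
            (∑ x : Fin 2, |P μ (seq t).1 (seq t).2.1 (seq t).2.2 x
              - P μ' (seq t).1 (seq t).2.1 (seq t).2.2 x|) ^ 2) ≤ ε ^ 2 ∧
        ε < ∑ x : Fin 2, |P μ (seq i).1 (seq i).2.1 (seq i).2.2 x
              - P μ' (seq i).1 (seq i).2.1 (seq i).2.2 x|) :=
  MFC_lower_bound_construction_general d hd hcard L_T ε hL hε hεL ζ hζ 𝓝 h𝓝 P hP0 hP1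
end

section
/- There is an absolute constant c > 0 with the following property. Let S, A be finite sets, d̃, d ∈ ℕ, C_φ, C_Ψ > 0, let φ : S × A → ℝ^{d̃} satisfy ‖φ(s,a)‖₂ ≤ C_φ for all (s,a), and let G : Δ(S) → ℝ^{d̃×d}. Let Ψ be a set of functions ψ : S → ℝ^d such that for every ψ ∈ Ψ: (i) for all (s,a,μ) ∈ S×A×Δ(S), the function s' ↦ P_ψ(s'|s,a,μ) := φ(s,a)ᵀ G(μ) ψ(s') is a probability distribution on S; and (ii) for every μ ∈ Δ(S) and every g : S → {−1,+1}, ‖Σ_{s'∈S} g(s')·G(μ)ψ(s')‖₂ ≤ C_Ψ. Then for every ε > 0 and every mapping ν assigning to each ψ ∈ Ψ a density ν(ψ) ∈ Δ(S), every sequence of pairs in S×A that is partially ε-independent with respect to the linear model class 𝓜_Ψ := {P_ψ : ψ ∈ Ψ} and ν has length at most c · d̃ · log(2 + d̃·C_φ·C_Ψ/ε). In particular the partial model-based Eluder dimension of a decomposable linear mean-field model class is O(d̃ log(d̃ C_φ C_Ψ/ε)). -/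
open Matrix

/-- The linear mean-field transition kernel `P_ψ(s'|s,a,μ) := φ(s,a)ᵀ G(μ) ψ(s')`. -/
def linKer {S A : Type} {dt d : ℕ} (φ : S → A → Fin dt → ℝ)
    (G : (S → ℝ) → Matrix (Fin dt) (Fin d) ℝ) (ψ : S → Fin d → ℝ)
    (s : S) (a : A) (μ : S → ℝ) (s' : S) : ℝ :=
  φ s a ⬝ᵥ (G μ).mulVec fun j => ψ s' j

/-!
For the `i`-th pair let `ψ₁, ψ₂` be the models witnessing its independence, `x_t = φ(s_t, a_t)`,
and `v_i = Σ_{s'} g(s') (G(ν ψ₁) ψ₁(s') - G(ν ψ₂) ψ₂(s'))`, where `g(s') = ±1` is the sign of the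
`s'`-term of `x_iᵀ(…)`. Then `x_iᵀ v_i` is the ℓ1 distance of the two kernels at `(s_i, a_i)`,
`|x_tᵀ v_i|` is at most that distance at `(s_t, a_t)`, and the normalization hypothesis gives
`‖v_i‖ ≤ 2 C_Ψ`. So the features are ε-independent for linear functionals and the elliptic potential
argument applies: with `W_k = λ I + Σ_{t<k} x_t x_tᵀ` and `λ = ε² / (2 C_Ψ)²`, Cauchy–Schwarz in the
`W_k`-geometry gives `x_kᵀ W_k⁻¹ x_k > 1/2`, so by the matrix determinant lemma
`det W_n ≥ λ^d̃ (3/2)^n`, whereas `det W_n ≤ (λ + n C_φ²)^d̃`. Solving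
`n log (3/2) ≤ d̃ log (1 + n R²)` for `n` gives the bound.
-/

namespace Matrix

variable {n : Type*} [Fintype n]

theorem PosSemidef.sq_dotProduct_mulVec_le {M : Matrix n n ℝ} (hM : M.PosSemidef) (x y : n → ℝ) :
    (x ⬝ᵥ M *ᵥ y) ^ 2 ≤ (x ⬝ᵥ M *ᵥ x) * (y ⬝ᵥ M *ᵥ y) := by
  let := M.toSeminormedAddCommGroup hM
  let := M.toInnerProductSpace hM
  have hinner : ∀ x y : n → ℝ, (inner ℝ x y : ℝ) = x ⬝ᵥ M *ᵥ y := fun x y => by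
    change (M *ᵥ y) ⬝ᵥ star x = _
    simp [dotProduct_comm]
  simpa only [sq, hinner] using real_inner_mul_inner_self_le x y

theorem PosDef.sq_dotProduct_le [DecidableEq n] {M : Matrix n n ℝ} (hM : M.PosDef) (a b : n → ℝ) :
    (a ⬝ᵥ b) ^ 2 ≤ (a ⬝ᵥ M⁻¹ *ᵥ a) * (b ⬝ᵥ M *ᵥ b) := by
  have hMinv : M * M⁻¹ = 1 := mul_nonsing_inv M hM.det_pos.ne'.isUnit
  have hsymm : Mᵀ = M := hM.isHermitian.eq
  have h := hM.posSemidef.sq_dotProduct_mulVec_le (M⁻¹ *ᵥ a) b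
  have hab : M⁻¹ *ᵥ a ⬝ᵥ M *ᵥ b = a ⬝ᵥ b := by
    rw [dotProduct_mulVec, ← mulVec_transpose, hsymm, mulVec_mulVec, hMinv, one_mulVec]
  rwa [hab, mulVec_mulVec, hMinv, one_mulVec, dotProduct_comm (M⁻¹ *ᵥ a)] at h

theorem det_add_vecMulVec {R : Type*} [CommRing R] [DecidableEq n] {M : Matrix n n R}
    (hM : IsUnit M.det) (u v : n → R) :
    (M + vecMulVec u v).det = M.det * (1 + v ⬝ᵥ M⁻¹ *ᵥ u) := by
  have : M + vecMulVec u v = M * (1 + vecMulVec (M⁻¹ *ᵥ u) v) := by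
    rw [mul_add, mul_one, mul_vecMulVec, mulVec_mulVec, mul_nonsing_inv M hM, one_mulVec]
  rw [this, det_mul, vecMulVec_eq Unit, det_one_add_replicateCol_mul_replicateRow]

theorem PosSemidef.det_le_pow [DecidableEq n] {M : Matrix n n ℝ} (hM : M.PosSemidef) {K : ℝ}
    (hK : ∀ y, y ⬝ᵥ M *ᵥ y ≤ K * (y ⬝ᵥ y)) : M.det ≤ K ^ Fintype.card n := by
  rw [hM.isHermitian.det_eq_prod_eigenvalues, ← Finset.card_univ, ← Finset.prod_const]
  refine Finset.prod_le_prod (fun i _ => hM.eigenvalues_nonneg i) fun i _ => ?_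
  set u := hM.isHermitian.eigenvectorBasis i
  have hu : (⇑u : n → ℝ) ⬝ᵥ ⇑u = 1 := by
    have h := real_inner_self_eq_norm_sq u
    rw [hM.isHermitian.eigenvectorBasis.orthonormal.1 i,
      EuclideanSpace.inner_eq_star_dotProduct] at h
    simpa [dotProduct_comm] using h
  simpa [hM.isHermitian.eigenvalues_eq i, hu] using hK u

end Matrix

section RegularizedGram

variable {ι n : Type*} [DecidableEq n]

def regGram (lam : ℝ) (x : ι → n → ℝ) (s : Finset ι) : Matrix n n ℝ :=
  lam • 1 + ∑ t ∈ s, vecMulVec (x t) (x t)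

theorem dotProduct_regGram_mulVec [Fintype n] (lam : ℝ) (x : ι → n → ℝ) (s : Finset ι) (y : n → ℝ) :
    y ⬝ᵥ regGram lam x s *ᵥ y = lam * (y ⬝ᵥ y) + ∑ t ∈ s, (x t ⬝ᵥ y) ^ 2 := by
  simp only [regGram, add_mulVec, smul_mulVec, one_mulVec, Matrix.sum_mulVec, vecMulVec_mulVec,
    dotProduct_add, dotProduct_smul, dotProduct_sum, smul_eq_mul]
  congr 1
  refine Finset.sum_congr rfl fun t _ => ?_
  simp [dotProduct_comm y, sq]

theorem posDef_regGram [Fintype n] {lam : ℝ} (hlam : 0 < lam) (x : ι → n → ℝ) (s : Finset ι) :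
    (regGram lam x s).PosDef :=
  (PosDef.one.smul hlam).add_posSemidef <|
    posSemidef_sum s fun t _ => by simpa using posSemidef_vecMulVec_self_star (x t)

theorem regGram_insert [DecidableEq ι] (lam : ℝ) (x : ι → n → ℝ) {s : Finset ι} {k : ι}
    (hk : k ∉ s) : regGram lam x (insert k s) = regGram lam x s + vecMulVec (x k) (x k) := by
  rw [regGram, regGram, Finset.sum_insert hk]
  abel

theorem det_regGram_le [Fintype n] {lam C : ℝ} (hlam : 0 < lam) {x : ι → n → ℝ} {s : Finset ι}
    (hx : ∀ t ∈ s, x t ⬝ᵥ x t ≤ C) :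
    (regGram lam x s).det ≤ (lam + s.card * C) ^ Fintype.card n := by
  refine (posDef_regGram hlam x s).posSemidef.det_le_pow fun y => ?_
  rw [dotProduct_regGram_mulVec]
  have hsum : ∑ t ∈ s, (x t ⬝ᵥ y) ^ 2 ≤ ∑ t ∈ s, C * (y ⬝ᵥ y) := Finset.sum_le_sum fun t ht => by
    have hCS : (x t ⬝ᵥ y) ^ 2 ≤ (x t ⬝ᵥ x t) * (y ⬝ᵥ y) := by
      simpa using PosSemidef.one.sq_dotProduct_mulVec_le (x t) y
    exact hCS.trans (mul_le_mul_of_nonneg_right (hx t ht) (dotProduct_self_star_nonneg y))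
  rw [Finset.sum_const, nsmul_eq_mul] at hsum
  linarith

end RegularizedGram

section EllipticPotential

variable {ι n : Type*} [LinearOrder ι] [LocallyFiniteOrderBot ι] [Fintype n] [DecidableEq n]

/-- `v i` is a linear functional in which `x i` is `ε`-independent of its predecessors. -/
def IsEluderWitness (ε : ℝ) (x v : ι → n → ℝ) : Prop :=
  ∀ i, ∑ t ∈ Finset.Iio i, (x t ⬝ᵥ v i) ^ 2 ≤ ε ^ 2 ∧ ε < x i ⬝ᵥ v i

theorem IsEluderWitness.one_half_lt_dotProduct_inv_regGram {ε lam : ℝ} {x v : ι → n → ℝ}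
    (hw : IsEluderWitness ε x v) (hε : 0 < ε) (hlam : 0 < lam) {i : ι}
    (hv : lam * (v i ⬝ᵥ v i) ≤ ε ^ 2) {s : Finset ι} (hs : ∀ t ∈ s, t < i) :
    1 / 2 < x i ⬝ᵥ (regGram lam x s)⁻¹ *ᵥ x i := by
  have hW := posDef_regGram hlam x s
  have hprev : ∑ t ∈ s, (x t ⬝ᵥ v i) ^ 2 ≤ ε ^ 2 :=
    (Finset.sum_le_sum_of_subset_of_nonneg (fun t ht => Finset.mem_Iio.2 (hs t ht))
      fun _ _ _ => sq_nonneg _).trans (hw i).1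
  have hvWv : v i ⬝ᵥ regGram lam x s *ᵥ v i ≤ 2 * ε ^ 2 := by
    rw [dotProduct_regGram_mulVec]; linarith
  have hcur : ε ^ 2 < (x i ⬝ᵥ v i) ^ 2 := pow_lt_pow_left₀ (hw i).2 hε.le two_ne_zero
  have hq : 0 ≤ x i ⬝ᵥ (regGram lam x s)⁻¹ *ᵥ x i := by
    simpa using hW.inv.posSemidef.dotProduct_mulVec_nonneg (x i)
  nlinarith [hW.sq_dotProduct_le (x i) (v i), mul_le_mul_of_nonneg_left hvWv hq]

theorem IsEluderWitness.pow_mul_le_det_regGram {ε lam : ℝ} {x v : ι → n → ℝ}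
    (hw : IsEluderWitness ε x v) (hε : 0 < ε) (hlam : 0 < lam)
    (hv : ∀ i, lam * (v i ⬝ᵥ v i) ≤ ε ^ 2) (s : Finset ι) :
    lam ^ Fintype.card n * (3 / 2) ^ s.card ≤ (regGram lam x s).det := by
  induction s using Finset.induction_on_max with
  | empty => simp [regGram]
  | insert a s hlt ih =>
    have ha : a ∉ s := fun h => lt_irrefl a (hlt a h)
    have hq := hw.one_half_lt_dotProduct_inv_regGram hε hlam (hv a) hlt
    rw [regGram_insert lam x ha, det_add_vecMulVec (posDef_regGram hlam x s).det_pos.ne'.isUnit,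
      Finset.card_insert_of_notMem ha, pow_succ, ← mul_assoc]
    exact mul_le_mul ih (by linarith) (by norm_num) (posDef_regGram hlam x s).det_pos.le

theorem IsEluderWitness.card_mul_log_le [Fintype ι] {ε B C : ℝ} {x v : ι → n → ℝ}
    (hw : IsEluderWitness ε x v) (hε : 0 < ε) (hB : 0 < B)
    (hx : ∀ i, x i ⬝ᵥ x i ≤ C ^ 2) (hv : ∀ i, v i ⬝ᵥ v i ≤ B ^ 2) :
    Fintype.card ι * Real.log (3 / 2) ≤
      Fintype.card n * Real.log (1 + Fintype.card ι * (C * B / ε) ^ 2) := by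
  set lam := ε ^ 2 / B ^ 2
  have hlam : 0 < lam := by positivity
  have hv' : ∀ i, lam * (v i ⬝ᵥ v i) ≤ ε ^ 2 := fun i => by
    calc lam * (v i ⬝ᵥ v i) ≤ lam * B ^ 2 := mul_le_mul_of_nonneg_left (hv i) hlam.le
      _ = ε ^ 2 := div_mul_cancel₀ _ (by positivity)
  have hdet := (hw.pow_mul_le_det_regGram hε hlam hv' Finset.univ).trans
    (det_regGram_le hlam fun t _ => hx t)
  have hfac : lam + Fintype.card ι * C ^ 2 = lam * (1 + Fintype.card ι * (C * B / ε) ^ 2) := by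
    simp only [lam]; field_simp
  rw [Finset.card_univ, hfac, mul_pow] at hdet
  have := Real.log_le_log (by positivity) (le_of_mul_le_mul_left hdet (by positivity))
  rwa [Real.log_pow, Real.log_pow] at this

end EllipticPotential

section SignedSum

variable {S n : Type*} [Fintype S] [Fintype n]

/-- The signs are `±1`, never `0` as `SignType.sign` would give: the normalization hypothesis on the
next-state features is only available for `±1`-valued sign patterns. -/
noncomputable def signedSum (x : n → ℝ) (Δ : S → n → ℝ) : n → ℝ :=
  ∑ s, (if 0 ≤ x ⬝ᵥ Δ s then 1 else -1 : ℝ) • Δ s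

theorem dotProduct_signedSum (y x : n → ℝ) (Δ : S → n → ℝ) :
    y ⬝ᵥ signedSum x Δ = ∑ s, (if 0 ≤ x ⬝ᵥ Δ s then 1 else -1 : ℝ) * (y ⬝ᵥ Δ s) := by
  simp only [signedSum, dotProduct_sum, dotProduct_smul, smul_eq_mul]

theorem dotProduct_signedSum_self (x : n → ℝ) (Δ : S → n → ℝ) :
    x ⬝ᵥ signedSum x Δ = ∑ s, |x ⬝ᵥ Δ s| := by
  rw [dotProduct_signedSum]
  refine Finset.sum_congr rfl fun s _ => ?_
  split_ifs with h
  · rw [one_mul, abs_of_nonneg h]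
  · rw [neg_one_mul, abs_of_neg (not_le.1 h)]

theorem abs_dotProduct_signedSum_le (y x : n → ℝ) (Δ : S → n → ℝ) :
    |y ⬝ᵥ signedSum x Δ| ≤ ∑ s, |y ⬝ᵥ Δ s| := by
  rw [dotProduct_signedSum]
  refine (Finset.abs_sum_le_sum_abs _ _).trans (le_of_eq (Finset.sum_congr rfl fun s _ => ?_))
  split_ifs <;> simp

theorem dotProduct_self_le_sq_of_sqrt_le {u : n → ℝ} {C : ℝ} (h : √(∑ i, u i ^ 2) ≤ C) :
    u ⬝ᵥ u ≤ C ^ 2 := by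
  simpa only [dotProduct, sq] using (Real.sqrt_le_iff.1 h).2

theorem sqrt_sum_sq_sub_le (u w : n → ℝ) :
    √(∑ i, (u i - w i) ^ 2) ≤ √(∑ i, u i ^ 2) + √(∑ i, w i ^ 2) := by
  have hnorm : ∀ z : n → ℝ, √(∑ i, z i ^ 2) = ‖WithLp.toLp 2 z‖ := fun z => by
    simp [EuclideanSpace.norm_eq]
  calc √(∑ i, (u i - w i) ^ 2) = ‖WithLp.toLp 2 u - WithLp.toLp 2 w‖ := by
        rw [← WithLp.toLp_sub, ← hnorm]; rfl
    _ ≤ _ := norm_sub_le _ _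
    _ = _ := by rw [hnorm, hnorm]

theorem signedSum_sub_dotProduct_self_le {x : n → ℝ} {p q : S → n → ℝ} {a b : ℝ}
    (hp : ∀ g : S → ℝ, (∀ s, g s = 1 ∨ g s = -1) → √(∑ i, (∑ s, g s * p s i) ^ 2) ≤ a)
    (hq : ∀ g : S → ℝ, (∀ s, g s = 1 ∨ g s = -1) → √(∑ i, (∑ s, g s * q s i) ^ 2) ≤ b) :
    signedSum x (p - q) ⬝ᵥ signedSum x (p - q) ≤ (a + b) ^ 2 := by
  set g : S → ℝ := fun s => if 0 ≤ x ⬝ᵥ (p - q) s then 1 else -1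
  have hg : ∀ s, g s = 1 ∨ g s = -1 := fun s => by
    simp only [g]; split_ifs <;> simp
  have hsplit : ∀ i, signedSum x (p - q) i = ∑ s, g s * p s i - ∑ s, g s * q s i := fun i => by
    change (∑ s, g s • (p - q) s) i = _
    simp only [Finset.sum_apply, Pi.smul_apply, Pi.sub_apply, smul_eq_mul, mul_sub,
      Finset.sum_sub_distrib]
  refine dotProduct_self_le_sq_of_sqrt_le ?_
  simp only [hsplit]
  exact (sqrt_sum_sq_sub_le _ _).trans (add_le_add (hp g hg) (hq g hg))

theorem isEluderWitness_signedSum {ι S n : Type*} [LinearOrder ι] [LocallyFiniteOrderBot ι]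
    [Fintype S] [Fintype n] {ε : ℝ} {x : ι → n → ℝ} {Δ : ι → S → n → ℝ}
    (hprev : ∀ i, ∑ t ∈ Finset.Iio i, (∑ s, |x t ⬝ᵥ Δ i s|) ^ 2 ≤ ε ^ 2)
    (hcur : ∀ i, ε < ∑ s, |x i ⬝ᵥ Δ i s|) :
    IsEluderWitness ε x fun i => signedSum (x i) (Δ i) := fun i =>
  ⟨(Finset.sum_le_sum fun _ _ => sq_le_sq' (neg_le_of_abs_le (abs_dotProduct_signedSum_le _ _ _))
      (le_of_abs_le (abs_dotProduct_signedSum_le _ _ _))).trans (hprev i),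
    (dotProduct_signedSum_self (x i) (Δ i)).symm ▸ hcur i⟩

end SignedSum

section Recursion

open Real

theorem one_third_le_log_three_halves : 1 / 3 ≤ log (3 / 2) := by
  have := one_sub_inv_le_log_of_pos (x := 3 / 2) (by norm_num)
  norm_num at this ⊢
  linarith

theorem six_mul_one_add_sq_le_pow {d R : ℝ} (hd : 1 ≤ d) (hR : 0 ≤ R) (hdR : 1 ≤ 3 * d * R ^ 2) :
    6 * d * (1 + R ^ 2) ≤ (2 + d * R) ^ 9 := by
  set y := d * R
  have hy : R ≤ y := le_mul_of_one_le_left hR hd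
  have hd_le : d ≤ 3 * y ^ 2 := by nlinarith
  have hR_le : 1 + R ^ 2 ≤ (2 + y) ^ 2 := by nlinarith
  have h2y : 2 ≤ 2 + y := by linarith
  calc 6 * d * (1 + R ^ 2) ≤ 6 * (3 * y ^ 2) * (2 + y) ^ 2 := by gcongr
    _ ≤ 18 * (2 + y) ^ 4 := by
        nlinarith [pow_le_pow_left₀ (by linarith) (show y ≤ 2 + y by linarith) 2]
    _ ≤ 2 ^ 5 * (2 + y) ^ 4 := by gcongr; norm_num
    _ ≤ (2 + y) ^ 5 * (2 + y) ^ 4 := by gcongr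
    _ = (2 + y) ^ 9 := by ring

theorem le_mul_log_of_mul_log_le {d N : ℕ} {R : ℝ} (hR : 0 ≤ R)
    (h : N * log (3 / 2) ≤ d * log (1 + N * R ^ 2)) : (N : ℝ) ≤ 54 * d * log (2 + d * R) := by
  have hL : 0 ≤ log (2 + d * R) := log_nonneg (by nlinarith [d.cast_nonneg (α := ℝ)])
  rcases N.eq_zero_or_pos with rfl | hN
  · simp only [CharP.cast_eq_zero]; positivity
  have hN : (1 : ℝ) ≤ N := Nat.one_le_cast.2 hN
  have h3 : (N : ℝ) / 3 ≤ d * log (1 + N * R ^ 2) := by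
    nlinarith [one_third_le_log_three_halves]
  have hdR : 1 ≤ 3 * d * R ^ 2 := by
    have := log_le_sub_one_of_pos (x := 1 + N * R ^ 2) (by positivity)
    nlinarith [d.cast_nonneg (α := ℝ)]
  have hd : (1 : ℝ) ≤ d := by
    rcases d.eq_zero_or_pos with rfl | hd
    · norm_num at hdR
    · exact Nat.one_le_cast.2 hd
  have hsplit : log (1 + N * R ^ 2) ≤ log N + log (1 + R ^ 2) := by
    rw [← log_mul (by positivity) (by positivity)]
    exact log_le_log (by positivity) (by nlinarith)
  have hlogN : log N ≤ N / (6 * d) + log (6 * d) := by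
    have := log_le_self (x := N / (6 * d)) (by positivity)
    rw [log_div (by positivity) (by positivity)] at this
    linarith
  have hpow : log (6 * d * (1 + R ^ 2)) ≤ 9 * log (2 + d * R) := by
    rw [show (9 : ℝ) = (9 : ℕ) by norm_num, ← log_pow]
    exact log_le_log (by positivity) (six_mul_one_add_sq_le_pow hd hR hdR)
  have hcancel : d * (N / (6 * d)) = (N : ℝ) / 6 := by field_simp
  rw [log_mul (by positivity) (by positivity)] at hpow
  nlinarith

theorem log_two_add_two_mul_le {y : ℝ} (hy : 0 ≤ y) : log (2 + 2 * y) ≤ 2 * log (2 + y) := by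
  have h := log_pow (2 + y) 2
  push_cast at h
  rw [← h]
  exact log_le_log (by positivity) (by nlinarith)

end Recursion

theorem linKer_sub_linKer {S A : Type} {dt d : ℕ} (φ : S → A → Fin dt → ℝ)
    (G : (S → ℝ) → Matrix (Fin dt) (Fin d) ℝ) (ψ₁ ψ₂ : S → Fin d → ℝ) (s : S) (a : A)
    (μ₁ μ₂ : S → ℝ) (s' : S) :
    linKer φ G ψ₁ s a μ₁ s' - linKer φ G ψ₂ s a μ₂ s' = φ s a ⬝ᵥ (G μ₁ *ᵥ ψ₁ s' - G μ₂ *ᵥ ψ₂ s') :=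
  (dotProduct_sub _ _ _).symm

/-- There is an absolute constant `c > 0` such that for every decomposable
linear mean-field model class `𝓜_Ψ = {P_ψ : ψ ∈ Ψ}` (with bounded features and normalized
next-state features), every partially ε-independent sequence with respect to `𝓜_Ψ` and any
density mapping `ν` has length at most `c · dt · log(2 + dt·C_φ·C_Ψ/ε)`. -/
theorem linear_partial_eluder_bound :
    ∃ c : ℝ, 0 < c ∧
      ∀ (S A : Type) (_ : Fintype S) (_ : Fintype A) (dt d : ℕ) (Cφ CΨ : ℝ),
        0 < Cφ → 0 < CΨ →
        ∀ (φ : S → A → Fin dt → ℝ),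
          (∀ s a, Real.sqrt (∑ i, (φ s a i) ^ 2) ≤ Cφ) →
        ∀ (G : (S → ℝ) → Matrix (Fin dt) (Fin d) ℝ) (Ψ : Set (S → Fin d → ℝ)),
          -- each P_ψ is a transition kernel
          (∀ ψ ∈ Ψ, ∀ s a, ∀ μ ∈ stdSimplex ℝ S,
            (fun s' => linKer φ G ψ s a μ s') ∈ stdSimplex ℝ S) →
          -- normalization of the next-state features
          (∀ ψ ∈ Ψ, ∀ μ ∈ stdSimplex ℝ S, ∀ g : S → ℝ, (∀ s', g s' = 1 ∨ g s' = -1) →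
            Real.sqrt (∑ i, (∑ s', g s' * ((G μ).mulVec fun j => ψ s' j) i) ^ 2) ≤ CΨ) →
        ∀ ε : ℝ, 0 < ε →
        ∀ ν : (S → Fin d → ℝ) → (S → ℝ), (∀ ψ ∈ Ψ, ν ψ ∈ stdSimplex ℝ S) →
        ∀ (n : ℕ) (seq : Fin n → S × A),
          -- the sequence is partially ε-independent w.r.t. 𝓜_Ψ and ν
          (∀ i : Fin n, ∃ ψ₁ ∈ Ψ, ∃ ψ₂ ∈ Ψ,
            (∑ t ∈ Finset.Iio i,
                (∑ s', |linKer φ G ψ₁ (seq t).1 (seq t).2 (ν ψ₁) s'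
                  - linKer φ G ψ₂ (seq t).1 (seq t).2 (ν ψ₂) s'|) ^ 2) ≤ ε ^ 2 ∧
            ε < ∑ s', |linKer φ G ψ₁ (seq i).1 (seq i).2 (ν ψ₁) s'
                  - linKer φ G ψ₂ (seq i).1 (seq i).2 (ν ψ₂) s'|) →
          (n : ℝ) ≤ c * dt * Real.log (2 + dt * Cφ * CΨ / ε) := by
  refine ⟨108, by norm_num, ?_⟩
  intro S A _ _ dt d Cφ CΨ _ hCΨ φ hφ G Ψ _ hΨ ε hε ν hν n seq hseq
  choose ψ₁ hψ₁ ψ₂ hψ₂ hprev hcur using hseq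
  set x : Fin n → Fin dt → ℝ := fun i => φ (seq i).1 (seq i).2
  set Δ : Fin n → S → Fin dt → ℝ := fun i s' => G (ν (ψ₁ i)) *ᵥ ψ₁ i s' - G (ν (ψ₂ i)) *ᵥ ψ₂ i s'
  have hw : IsEluderWitness ε x fun i => signedSum (x i) (Δ i) :=
    isEluderWitness_signedSum (by simpa only [linKer_sub_linKer] using hprev)
      (by simpa only [linKer_sub_linKer] using hcur)
  have hx : ∀ i, x i ⬝ᵥ x i ≤ Cφ ^ 2 := fun i => dotProduct_self_le_sq_of_sqrt_le (hφ _ _)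
  have hv : ∀ i, signedSum (x i) (Δ i) ⬝ᵥ signedSum (x i) (Δ i) ≤ (2 * CΨ) ^ 2 := fun i => by
    rw [two_mul]
    exact signedSum_sub_dotProduct_self_le (hΨ _ (hψ₁ i) _ (hν _ (hψ₁ i)))
      (hΨ _ (hψ₂ i) _ (hν _ (hψ₂ i)))
  have hcard := hw.card_mul_log_le hε (by positivity) hx hv
  rw [Fintype.card_fin, Fintype.card_fin] at hcard
  have hlog := log_two_add_two_mul_le (y := dt * Cφ * CΨ / ε) (by positivity)
  rw [show 2 * (dt * Cφ * CΨ / ε) = dt * (Cφ * (2 * CΨ) / ε) by ring] at hlog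
  calc (n : ℝ) ≤ 54 * dt * Real.log (2 + dt * (Cφ * (2 * CΨ) / ε)) :=
        le_mul_log_of_mul_log_le (by positivity) hcard
    _ ≤ 54 * dt * (2 * Real.log (2 + dt * Cφ * CΨ / ε)) := by gcongr
    _ = 108 * dt * Real.log (2 + dt * Cφ * CΨ / ε) := by ring
end

section
/- Let M and M̃ be two mean-field MDPs on the same finite S, A, horizon H and initial distribution μ₁, sharing the same reward functions r_h : S × A × Δ(S) → [0,1/H], and suppose the rewards are L_r-Lipschitz in the density: |r_h(s,a,μ) − r_h(s,a,μ')| ≤ L_r·‖μ − μ'‖₁ for all h, s, a and all μ, μ' ∈ Δ(S). Let π̂ be an ε₁-approximate Nash equilibrium of M (i.e., max_{π̃∈Π} Δ_M(π̃,π̂) ≤ ε₁), and suppose d(M,M̃|π̂) ≤ ε₂. Then π̂ is an (ε₁ + 2(L_r·H + 1)·ε₂)-approximate Nash equilibrium of M̃, i.e., for every π̃ ∈ Π: J_{M̃}(π̃;π̂) − J_{M̃}(π̂;π̂) ≤ ε₁ + 2(L_r·H + 1)·ε₂. -/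
/-- ℓ1 distance between two functions on a finite type. -/
def l1 {X : Type*} [Fintype X] (p q : X → ℝ) : ℝ := ∑ x, |p x - q x|

/-- A (nonstationary Markov) policy: at each step `h` (0-indexed) and state `s`,
`π h s` is a probability distribution over actions. -/
def IsPolicy {S A : Type*} [Fintype A] (π : ℕ → S → A → ℝ) : Prop :=
  ∀ h s, (∀ a, 0 ≤ π h s a) ∧ ∑ a, π h s a = 1

/-- The transition kernels of a mean-field MDP with horizon `H`:
at each step `h < H`, `P h s a μ ∈ Δ(S)` whenever `μ ∈ Δ(S)`. -/
def IsKernel {S A : Type*} [Fintype S] (H : ℕ) (P : ℕ → S → A → (S → ℝ) → S → ℝ) : Prop :=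
  ∀ h, h < H → ∀ s a (μ : S → ℝ), μ ∈ stdSimplex ℝ S → P h s a μ ∈ stdSimplex ℝ S

/-- Induced state densities: `dens P μ₁ π h = μ^π_{M,h+1}` (1-indexed step `h+1`). -/
def dens {S A : Type*} [Fintype S] [Fintype A] (P : ℕ → S → A → (S → ℝ) → S → ℝ)
    (μ₁ : S → ℝ) (π : ℕ → S → A → ℝ) : ℕ → S → ℝ
  | 0 => μ₁
  | h + 1 => fun s' => ∑ s, ∑ a, dens P μ₁ π h s * π h s a * P h s a (dens P μ₁ π h) s'

/-- The state law of executing `π̃` while the kernels are frozen at the densities induced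
by the reference policy `π` in model `M = (P, μ₁)`. -/
def densF {S A : Type*} [Fintype S] [Fintype A] (P : ℕ → S → A → (S → ℝ) → S → ℝ)
    (μ₁ : S → ℝ) (π πt : ℕ → S → A → ℝ) : ℕ → S → ℝ
  | 0 => μ₁
  | h + 1 => fun s' => ∑ s, ∑ a, densF P μ₁ π πt h s * πt h s a * P h s a (dens P μ₁ π h) s'

/-- `E_{π̃,M(π)}[Σ_{h=1}^H f_h(s_h,a_h)]`. -/
def expF {S A : Type*} [Fintype S] [Fintype A] (H : ℕ) (P : ℕ → S → A → (S → ℝ) → S → ℝ)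
    (μ₁ : S → ℝ) (π πt : ℕ → S → A → ℝ) (f : ℕ → S → A → ℝ) : ℝ :=
  ∑ h ∈ Finset.range H, ∑ s, ∑ a, densF P μ₁ π πt h s * πt h s a * f h s a

/-- The return `J_M(π̃;π)` of executing `π̃` with transitions and rewards frozen by `π`. -/
def Jret {S A : Type*} [Fintype S] [Fintype A] (H : ℕ) (P : ℕ → S → A → (S → ℝ) → S → ℝ)
    (r : ℕ → S → A → (S → ℝ) → ℝ) (μ₁ : S → ℝ) (πt π : ℕ → S → A → ℝ) : ℝ :=
  expF H P μ₁ π πt fun h s a => r h s a (dens P μ₁ π h)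

/-- One-sided conditional model distance `d^{π̃}(M,M'|π)`. -/
def dCond {S A : Type*} [Fintype S] [Fintype A] (H : ℕ)
    (P P' : ℕ → S → A → (S → ℝ) → S → ℝ) (μ₁ : S → ℝ) (π πt : ℕ → S → A → ℝ) : ℝ :=
  expF H P μ₁ π πt fun h s a => l1 (P h s a (dens P μ₁ π h)) (P' h s a (dens P' μ₁ π h))


section LAhelpers
variable {S A : Type*} [Fintype S] [Fintype A]

variable {S A : Type*} [Fintype S] [Fintype A]

lemma l1_nonneg {X : Type*} [Fintype X] (p q : X → ℝ) : 0 ≤ l1 p q :=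
  Finset.sum_nonneg fun _ _ => abs_nonneg _

lemma l1_symm {X : Type*} [Fintype X] (p q : X → ℝ) : l1 p q = l1 q p := by
  unfold l1; exact Finset.sum_congr rfl fun x _ => abs_sub_comm _ _

lemma simplex_iff {X : Type*} [Fintype X] {p : X → ℝ} :
    p ∈ stdSimplex ℝ X ↔ (∀ x, 0 ≤ p x) ∧ ∑ x, p x = 1 := Iff.rfl

lemma sum_triple_comm (f : S → A → S → ℝ) :
    ∑ s' : S, ∑ s : S, ∑ a : A, f s a s' = ∑ s : S, ∑ a : A, ∑ s' : S, f s a s' := by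
  rw [Finset.sum_comm]
  exact Finset.sum_congr rfl fun s _ => Finset.sum_comm

lemma dens_mem {H : ℕ} {P : ℕ → S → A → (S → ℝ) → S → ℝ} (hP : IsKernel H P)
    {μ₁ : S → ℝ} (hμ₁ : μ₁ ∈ stdSimplex ℝ S)
    {π : ℕ → S → A → ℝ} (hπ : IsPolicy π) :
    ∀ h, h ≤ H → dens P μ₁ π h ∈ stdSimplex ℝ S := by
  intro h
  induction h with
  | zero => exact fun _ => hμ₁
  | succ h ih =>
    intro hh
    have hhH : h < H := hh
    have hd := ih hhH.le
    constructor
    · intro s'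
      refine Finset.sum_nonneg fun s _ => Finset.sum_nonneg fun a _ => ?_
      exact mul_nonneg (mul_nonneg (hd.1 s) ((hπ h s).1 a)) ((hP h hhH s a _ hd).1 s')
    · show ∑ s', ∑ s, ∑ a, dens P μ₁ π h s * π h s a * P h s a (dens P μ₁ π h) s' = 1
      rw [sum_triple_comm]
      have : ∀ s a, ∑ s', dens P μ₁ π h s * π h s a * P h s a (dens P μ₁ π h) s'
          = dens P μ₁ π h s * π h s a := by
        intro s a; rw [← Finset.mul_sum, (hP h hhH s a _ hd).2, mul_one]
      simp only [this, ← Finset.mul_sum]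
      simp only [(fun s => (hπ h s).2), mul_one]
      exact hd.2

lemma densF_mem {H : ℕ} {P : ℕ → S → A → (S → ℝ) → S → ℝ} (hP : IsKernel H P)
    {μ₁ : S → ℝ} (hμ₁ : μ₁ ∈ stdSimplex ℝ S)
    {π πt : ℕ → S → A → ℝ} (hπ : IsPolicy π) (hπt : IsPolicy πt) :
    ∀ h, h ≤ H → densF P μ₁ π πt h ∈ stdSimplex ℝ S := by
  intro h
  induction h with
  | zero => exact fun _ => hμ₁
  | succ h ih =>
    intro hh
    have hhH : h < H := hh
    have hd := ih hhH.le
    have hdd := dens_mem hP hμ₁ hπ h hhH.le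
    constructor
    · intro s'
      refine Finset.sum_nonneg fun s _ => Finset.sum_nonneg fun a _ => ?_
      exact mul_nonneg (mul_nonneg (hd.1 s) ((hπt h s).1 a)) ((hP h hhH s a _ hdd).1 s')
    · show ∑ s', ∑ s, ∑ a, densF P μ₁ π πt h s * πt h s a * P h s a (dens P μ₁ π h) s' = 1
      rw [sum_triple_comm]
      have : ∀ s a, ∑ s', densF P μ₁ π πt h s * πt h s a * P h s a (dens P μ₁ π h) s'
          = densF P μ₁ π πt h s * πt h s a := by
        intro s a; rw [← Finset.mul_sum, (hP h hhH s a _ hdd).2, mul_one]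
      simp only [this, ← Finset.mul_sum]
      simp only [(fun s => (hπt h s).2), mul_one]
      exact hd.2

lemma densF_self (P : ℕ → S → A → (S → ℝ) → S → ℝ) (μ₁ : S → ℝ) (π : ℕ → S → A → ℝ) :
    ∀ h, densF P μ₁ π π h = dens P μ₁ π h := by
  intro h
  induction h with
  | zero => rfl
  | succ h ih => funext s'; simp only [densF, dens, ih]
lemma l1_densF_le {H : ℕ} {P Pt : ℕ → S → A → (S → ℝ) → S → ℝ}
    (hP : IsKernel H P) (hPt : IsKernel H Pt)
    {μ₁ : S → ℝ} (hμ₁ : μ₁ ∈ stdSimplex ℝ S)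
    {π πt : ℕ → S → A → ℝ} (hπ : IsPolicy π) (hπt : IsPolicy πt) :
    ∀ h, h ≤ H → l1 (densF P μ₁ π πt h) (densF Pt μ₁ π πt h) ≤
      ∑ k ∈ Finset.range h, ∑ s, ∑ a, densF Pt μ₁ π πt k s * πt k s a *
        l1 (Pt k s a (dens Pt μ₁ π k)) (P k s a (dens P μ₁ π k)) := by
  intro h
  induction h with
  | zero => intro _; simp [l1, densF]
  | succ h ih =>
    intro hh
    have hhH : h < H := hh
    set ν := densF P μ₁ π πt h with hν
    set ν' := densF Pt μ₁ π πt h with hν'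
    set μ := dens P μ₁ π h with hμ
    set μ' := dens Pt μ₁ π h with hμ'
    have hνm := densF_mem hPt hμ₁ hπ hπt h hhH.le
    have hμm := dens_mem hP hμ₁ hπ h hhH.le
    have hμ'm := dens_mem hPt hμ₁ hπ h hhH.le
    have step : l1 (densF P μ₁ π πt (h+1)) (densF Pt μ₁ π πt (h+1)) ≤
        l1 ν ν' + ∑ s, ∑ a, ν' s * πt h s a *
          l1 (Pt h s a μ') (P h s a μ) := by
      have expand : l1 (densF P μ₁ π πt (h+1)) (densF Pt μ₁ π πt (h+1)) =
          ∑ s', |∑ s, ∑ a, (ν s * πt h s a * P h s a μ s'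
            - ν' s * πt h s a * Pt h s a μ' s')| := by
        unfold l1
        refine Finset.sum_congr rfl fun s' _ => ?_
        congr 1
        show (∑ s, ∑ a, ν s * πt h s a * P h s a μ s')
            - (∑ s, ∑ a, ν' s * πt h s a * Pt h s a μ' s') = _
        rw [← Finset.sum_sub_distrib]
        exact Finset.sum_congr rfl fun s _ => by rw [← Finset.sum_sub_distrib]
      rw [expand]
      have tri : ∀ s', |∑ s, ∑ a, (ν s * πt h s a * P h s a μ s'
            - ν' s * πt h s a * Pt h s a μ' s')| ≤
          ∑ s, ∑ a, (|ν s - ν' s| * πt h s a * P h s a μ s'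
            + ν' s * πt h s a * |P h s a μ s' - Pt h s a μ' s'|) := by
        intro s'
        calc |∑ s, ∑ a, (ν s * πt h s a * P h s a μ s' - ν' s * πt h s a * Pt h s a μ' s')|
            ≤ ∑ s, |∑ a, (ν s * πt h s a * P h s a μ s' - ν' s * πt h s a * Pt h s a μ' s')| :=
              Finset.abs_sum_le_sum_abs _ _
          _ ≤ ∑ s, ∑ a, |ν s * πt h s a * P h s a μ s' - ν' s * πt h s a * Pt h s a μ' s'| :=
              Finset.sum_le_sum fun s _ => Finset.abs_sum_le_sum_abs _ _
          _ ≤ _ := by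
              refine Finset.sum_le_sum fun s _ => Finset.sum_le_sum fun a _ => ?_
              have : ν s * πt h s a * P h s a μ s' - ν' s * πt h s a * Pt h s a μ' s'
                  = (ν s - ν' s) * πt h s a * P h s a μ s'
                    + ν' s * πt h s a * (P h s a μ s' - Pt h s a μ' s') := by ring
              rw [this]
              refine le_trans (abs_add_le _ _) (add_le_add ?_ ?_)
              · rw [abs_mul, abs_mul, abs_of_nonneg ((hπt h s).1 a),
                  abs_of_nonneg ((hP h hhH s a _ hμm).1 s')]
              · rw [abs_mul, abs_mul,
                  abs_of_nonneg (hνm.1 s), abs_of_nonneg ((hπt h s).1 a)]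
      refine le_trans (Finset.sum_le_sum fun s' _ => tri s') ?_
      rw [show (∑ s' : S, ∑ s, ∑ a, (|ν s - ν' s| * πt h s a * P h s a μ s'
            + ν' s * πt h s a * |P h s a μ s' - Pt h s a μ' s'|))
          = (∑ s' : S, ∑ s, ∑ a, |ν s - ν' s| * πt h s a * P h s a μ s')
            + (∑ s' : S, ∑ s, ∑ a, ν' s * πt h s a * |P h s a μ s' - Pt h s a μ' s'|) by
        rw [← Finset.sum_add_distrib]
        refine Finset.sum_congr rfl fun s' _ => ?_
        rw [← Finset.sum_add_distrib]
        refine Finset.sum_congr rfl fun s _ => ?_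
        rw [← Finset.sum_add_distrib]]
      refine add_le_add ?_ ?_
      · -- first part equals l1 ν ν'
        rw [sum_triple_comm]
        have : ∀ s a, ∑ s', |ν s - ν' s| * πt h s a * P h s a μ s'
            = |ν s - ν' s| * πt h s a := by
          intro s a; rw [← Finset.mul_sum, (hP h hhH s a _ hμm).2, mul_one]
        simp only [this, ← Finset.mul_sum]
        simp only [(fun s => (hπt h s).2), mul_one]
        exact le_of_eq rfl
      · rw [sum_triple_comm]
        refine le_of_eq (Finset.sum_congr rfl fun s _ => Finset.sum_congr rfl fun a _ => ?_)
        rw [← Finset.mul_sum]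
        congr 1
        rw [l1_symm]
        unfold l1
        exact Finset.sum_congr rfl fun s' _ => rfl
    refine le_trans step ?_
    rw [Finset.sum_range_succ]
    gcongr
    exact ih hhH.le

lemma l1_densF_le_dCond {H : ℕ} {P Pt : ℕ → S → A → (S → ℝ) → S → ℝ}
    (hP : IsKernel H P) (hPt : IsKernel H Pt)
    {μ₁ : S → ℝ} (hμ₁ : μ₁ ∈ stdSimplex ℝ S)
    {π πt : ℕ → S → A → ℝ} (hπ : IsPolicy π) (hπt : IsPolicy πt) :
    ∀ h, h ≤ H → l1 (densF P μ₁ π πt h) (densF Pt μ₁ π πt h) ≤ dCond H Pt P μ₁ π πt := by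
  intro h hh
  refine le_trans (l1_densF_le hP hPt hμ₁ hπ hπt h hh) ?_
  show _ ≤ ∑ k ∈ Finset.range H, ∑ s, ∑ a, densF Pt μ₁ π πt k s * πt k s a *
    l1 (Pt k s a (dens Pt μ₁ π k)) (P k s a (dens P μ₁ π k))
  refine Finset.sum_le_sum_of_subset_of_nonneg
    (Finset.range_subset_range.2 hh) fun k hk _ => ?_
  have hkH : k < H := Finset.mem_range.1 hk
  refine Finset.sum_nonneg fun s _ => Finset.sum_nonneg fun a _ => ?_
  exact mul_nonneg (mul_nonneg ((densF_mem hPt hμ₁ hπ hπt k hkH.le).1 s)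
    ((hπt k s).1 a)) (l1_nonneg _ _)

lemma dCond_nonneg {H : ℕ} (P : ℕ → S → A → (S → ℝ) → S → ℝ)
    {Pt : ℕ → S → A → (S → ℝ) → S → ℝ} (hPt : IsKernel H Pt)
    {μ₁ : S → ℝ} (hμ₁ : μ₁ ∈ stdSimplex ℝ S)
    {π πt : ℕ → S → A → ℝ} (hπ : IsPolicy π) (hπt : IsPolicy πt) :
    0 ≤ dCond H Pt P μ₁ π πt := by
  unfold dCond expF
  refine Finset.sum_nonneg fun k hk => ?_
  have hkH : k < H := Finset.mem_range.1 hk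
  refine Finset.sum_nonneg fun s _ => Finset.sum_nonneg fun a _ => ?_
  exact mul_nonneg (mul_nonneg ((densF_mem hPt hμ₁ hπ hπt k hkH.le).1 s)
    ((hπt k s).1 a)) (l1_nonneg _ _)

lemma Jret_close {H : ℕ} {P Pt : ℕ → S → A → (S → ℝ) → S → ℝ}
    (hP : IsKernel H P) (hPt : IsKernel H Pt)
    {r : ℕ → S → A → (S → ℝ) → ℝ}
    {μ₁ : S → ℝ} (hμ₁ : μ₁ ∈ stdSimplex ℝ S)
    {L_r : ℝ} (hLr : 0 ≤ L_r)
    (hrbd : ∀ h, h < H → ∀ s a (μ : S → ℝ), μ ∈ stdSimplex ℝ S →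
      r h s a μ ∈ Set.Icc (0 : ℝ) (1 / (H : ℝ)))
    (hrlip : ∀ h, h < H → ∀ s a, ∀ μ ∈ stdSimplex ℝ S, ∀ μ' ∈ stdSimplex ℝ S,
      |r h s a μ - r h s a μ'| ≤ L_r * l1 μ μ')
    {π πt : ℕ → S → A → ℝ} (hπ : IsPolicy π) (hπt : IsPolicy πt)
    {ε₂ : ℝ} (hε₂ : 0 ≤ ε₂)
    (hd1 : dCond H Pt P μ₁ π πt ≤ ε₂) (hd2 : dCond H Pt P μ₁ π π ≤ ε₂) :
    Jret H P r μ₁ πt π ≤ Jret H Pt r μ₁ πt π + (L_r * ↑H + 1) * ε₂ := by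
  rcases Nat.eq_zero_or_pos H with hH | hH
  · subst hH
    simp only [Jret, expF, Finset.range_zero, Finset.sum_empty, Nat.cast_zero]
    nlinarith
  have hHne : (H : ℝ) ≠ 0 := Nat.cast_ne_zero.2 hH.ne'
  set c : ℝ := ε₂ * (1 / (H : ℝ)) + L_r * ε₂ with hc
  have hmain : ∀ h ∈ Finset.range H,
      (∑ s, ∑ a, densF P μ₁ π πt h s * πt h s a * r h s a (dens P μ₁ π h)) ≤
      c + ∑ s, ∑ a, densF Pt μ₁ π πt h s * πt h s a * r h s a (dens Pt μ₁ π h) := by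
    intro h hhr
    have hhH : h < H := Finset.mem_range.1 hhr
    set ν := densF P μ₁ π πt h
    set ν' := densF Pt μ₁ π πt h with hν'def
    set μ := dens P μ₁ π h with hμdef
    set μ' := dens Pt μ₁ π h with hμ'def
    have hμm : μ ∈ stdSimplex ℝ S := dens_mem hP hμ₁ hπ h hhH.le
    have hμ'm : μ' ∈ stdSimplex ℝ S := dens_mem hPt hμ₁ hπ h hhH.le
    have hν'm : ν' ∈ stdSimplex ℝ S := densF_mem hPt hμ₁ hπ hπt h hhH.le
    have hl1ν : l1 ν ν' ≤ ε₂ :=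
      le_trans (l1_densF_le_dCond hP hPt hμ₁ hπ hπt h hhH.le) hd1
    have hl1μ : l1 μ μ' ≤ ε₂ := by
      rw [hμdef, hμ'def, ← densF_self P μ₁ π h, ← densF_self Pt μ₁ π h]
      exact le_trans (l1_densF_le_dCond hP hPt hμ₁ hπ hπ h hhH.le) hd2
    have term : ∀ s a, ν s * πt h s a * r h s a μ ≤
        (|ν s - ν' s| * (1 / (H : ℝ))) * πt h s a
          + (ν' s * (L_r * ε₂)) * πt h s a
          + ν' s * πt h s a * r h s a μ' := by
      intro s a
      have hπa : 0 ≤ πt h s a := (hπt h s).1 a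
      have hr1 := hrbd h hhH s a μ hμm
      have hlip : r h s a μ - r h s a μ' ≤ L_r * ε₂ := by
        refine le_trans (le_abs_self _) (le_trans (hrlip h hhH s a μ hμm μ' hμ'm) ?_)
        exact mul_le_mul_of_nonneg_left hl1μ hLr
      have e1 : (ν s - ν' s) * r h s a μ ≤ |ν s - ν' s| * (1 / (H : ℝ)) := by
        calc (ν s - ν' s) * r h s a μ ≤ |ν s - ν' s| * r h s a μ :=
              mul_le_mul_of_nonneg_right (le_abs_self _) hr1.1
          _ ≤ |ν s - ν' s| * (1 / (H : ℝ)) :=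
              mul_le_mul_of_nonneg_left hr1.2 (abs_nonneg _)
      have e2 : ν' s * (r h s a μ - r h s a μ') ≤ ν' s * (L_r * ε₂) :=
        mul_le_mul_of_nonneg_left hlip (hν'm.1 s)
      nlinarith [mul_le_mul_of_nonneg_right e1 hπa, mul_le_mul_of_nonneg_right e2 hπa]
    refine le_trans (Finset.sum_le_sum fun s _ => Finset.sum_le_sum fun a _ => term s a) ?_
    have inner : ∀ s : S,
        (∑ a, ((|ν s - ν' s| * (1 / (H : ℝ))) * πt h s a
          + (ν' s * (L_r * ε₂)) * πt h s a
          + ν' s * πt h s a * r h s a μ'))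
        = |ν s - ν' s| * (1 / (H : ℝ)) + ν' s * (L_r * ε₂)
          + ∑ a, ν' s * πt h s a * r h s a μ' := by
      intro s
      rw [Finset.sum_add_distrib, Finset.sum_add_distrib,
        ← Finset.mul_sum, ← Finset.mul_sum, (hπt h s).2, mul_one, mul_one]
    simp only [inner]
    rw [Finset.sum_add_distrib, Finset.sum_add_distrib,
      ← Finset.sum_mul, ← Finset.sum_mul, hν'm.2, one_mul]
    have hb : (∑ s, |ν s - ν' s|) * (1 / (H : ℝ)) ≤ ε₂ * (1 / (H : ℝ)) := by
      refine mul_le_mul_of_nonneg_right hl1ν ?_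
      positivity
    linarith
  have hcH : (H : ℝ) * c = (L_r * ↑H + 1) * ε₂ := by
    rw [hc]; field_simp; ring
  calc Jret H P r μ₁ πt π
      = ∑ h ∈ Finset.range H, ∑ s, ∑ a,
          densF P μ₁ π πt h s * πt h s a * r h s a (dens P μ₁ π h) := rfl
    _ ≤ ∑ h ∈ Finset.range H, (c + ∑ s, ∑ a,
          densF Pt μ₁ π πt h s * πt h s a * r h s a (dens Pt μ₁ π h)) :=
        Finset.sum_le_sum hmain
    _ = (H : ℝ) * c + Jret H Pt r μ₁ πt π := by
        rw [Finset.sum_add_distrib, Finset.sum_const, Finset.card_range, nsmul_eq_mul]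
        rfl
    _ = Jret H Pt r μ₁ πt π + (L_r * ↑H + 1) * ε₂ := by rw [hcH]; ring

end LAhelpers

/-- **Local alignment.** If `π̂` is an ε₁-approximate Nash equilibrium of `M`
and `d(M,M̃|π̂) ≤ ε₂`, then `π̂` is an `(ε₁ + 2(L_r·H + 1)·ε₂)`-approximate Nash equilibrium
of `M̃`, where rewards lie in `[0,1/H]` and are `L_r`-Lipschitz in the density. -/
theorem local_alignment {S A : Type*} [Fintype S] [Fintype A] (H : ℕ)
    (P Pt : ℕ → S → A → (S → ℝ) → S → ℝ) (r : ℕ → S → A → (S → ℝ) → ℝ)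
    (μ₁ : S → ℝ) (hμ₁ : μ₁ ∈ stdSimplex ℝ S)
    (hP : IsKernel H P) (hPt : IsKernel H Pt)
    (L_r : ℝ) (hLr : 0 ≤ L_r)
    (hrbd : ∀ h, h < H → ∀ s a (μ : S → ℝ), μ ∈ stdSimplex ℝ S →
      r h s a μ ∈ Set.Icc (0 : ℝ) (1 / (H : ℝ)))
    (hrlip : ∀ h, h < H → ∀ s a, ∀ μ ∈ stdSimplex ℝ S, ∀ μ' ∈ stdSimplex ℝ S,
      |r h s a μ - r h s a μ'| ≤ L_r * l1 μ μ')
    (ε₁ ε₂ : ℝ) (piHat : ℕ → S → A → ℝ) (hpiHat : IsPolicy piHat)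
    (hNE : ∀ πt, IsPolicy πt → Jret H P r μ₁ πt piHat - Jret H P r μ₁ piHat piHat ≤ ε₁)
    (hdist : ∀ πt, IsPolicy πt →
      dCond H P Pt μ₁ piHat πt ≤ ε₂ ∧ dCond H Pt P μ₁ piHat πt ≤ ε₂) :
    ∀ πt, IsPolicy πt →
      Jret H Pt r μ₁ πt piHat - Jret H Pt r μ₁ piHat piHat ≤ ε₁ + 2 * (L_r * H + 1) * ε₂ := by
  intro πt hπt
  have h1 := hdist πt hπt
  have h2 := hdist piHat hpiHat
  have hε₂ : 0 ≤ ε₂ :=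
    le_trans (dCond_nonneg P hPt hμ₁ hpiHat hpiHat) h2.2
  have A1 : Jret H Pt r μ₁ πt piHat ≤ Jret H P r μ₁ πt piHat + (L_r * ↑H + 1) * ε₂ :=
    Jret_close hPt hP hμ₁ hLr hrbd hrlip hpiHat hπt hε₂ h1.1 h2.1
  have A2 : Jret H P r μ₁ piHat piHat ≤ Jret H Pt r μ₁ piHat piHat + (L_r * ↑H + 1) * ε₂ :=
    Jret_close hP hPt hμ₁ hLr hrbd hrlip hpiHat hpiHat hε₂ h2.2 h2.2
  have A3 := hNE πt hπt
  linarith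
end

section
/- Let M and M' be two mean-field MDPs on the same finite S, A, horizon H and initial distribution μ₁, and let π, π' be two policies. Then for every h ∈ {1,…,H}: ‖μ^π_{M,h+1} − μ^{π'}_{M',h+1}‖₁ ≤ ‖μ^π_{M,h} − μ^{π'}_{M',h}‖₁ + d_{∞,1}(π,π') + Σ_{s,a} μ^π_{M,h}(s)·π_h(a|s)·‖P_{M,h}(·|s,a,μ^π_{M,h}) − P_{M',h}(·|s,a,μ^{π'}_{M',h})‖₁. (Density difference recursion.) -/
lemma dens_mem_simplex {S A : Type*} [Fintype S] [Fintype A] (H : ℕ)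
    (P : ℕ → S → A → (S → ℝ) → S → ℝ) (μ₁ : S → ℝ) (hμ₁ : μ₁ ∈ stdSimplex ℝ S)
    (hP : IsKernel H P) (π : ℕ → S → A → ℝ) (hπ : IsPolicy π) :
    ∀ h, h ≤ H → dens P μ₁ π h ∈ stdSimplex ℝ S := by
  intro h
  induction h with
  | zero => intro _; exact hμ₁
  | succ k ih =>
    intro hk
    have hkH : k < H := hk
    have hd := ih (le_of_lt hkH)
    refine ⟨?_, ?_⟩
    · intro s'
      refine Finset.sum_nonneg fun s _ => Finset.sum_nonneg fun a _ => ?_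
      exact mul_nonneg (mul_nonneg (hd.1 s) ((hπ k s).1 a)) ((hP k hkH s a _ hd).1 s')
    · show ∑ s', ∑ s, ∑ a, dens P μ₁ π k s * π k s a * P k s a (dens P μ₁ π k) s' = 1
      rw [Finset.sum_comm]
      have : ∀ s : S, ∑ s' : S, ∑ a, dens P μ₁ π k s * π k s a * P k s a (dens P μ₁ π k) s'
          = dens P μ₁ π k s := by
        intro s
        rw [Finset.sum_comm]
        have : ∀ a : A, ∑ s' : S, dens P μ₁ π k s * π k s a * P k s a (dens P μ₁ π k) s'
            = dens P μ₁ π k s * π k s a := by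
          intro a
          rw [← Finset.mul_sum, (hP k hkH s a _ hd).2, mul_one]
        rw [Finset.sum_congr rfl fun a _ => this a, ← Finset.mul_sum, (hπ k s).2, mul_one]
      rw [Finset.sum_congr rfl fun s _ => this s, hd.2]

/-- **Density difference recursion.** For two models `M, M'` and two policies
`π, π'`, for every step `h ∈ {1,…,H}` (here `h` is 0-indexed, `h < H`):
`‖μ^π_{M,h+1} − μ^{π'}_{M',h+1}‖₁ ≤ ‖μ^π_{M,h} − μ^{π'}_{M',h}‖₁ + d_{∞,1}(π,π')
  + Σ_{s,a} μ^π_{M,h}(s)·π_h(a|s)·‖P_{M,h}(·|s,a,μ^π_{M,h}) − P_{M',h}(·|s,a,μ^{π'}_{M',h})‖₁`.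
The quantity `d_{∞,1}(π,π') = max_{h<H,s} ‖π_h(·|s) − π'_h(·|s)‖₁` is represented by an
arbitrary upper bound `D` on all the ℓ1 distances `‖π_h(·|s) − π'_h(·|s)‖₁`. -/
theorem density_difference_recursion {S A : Type*} [Fintype S] [Fintype A] (H : ℕ)
    (P P' : ℕ → S → A → (S → ℝ) → S → ℝ) (μ₁ : S → ℝ) (hμ₁ : μ₁ ∈ stdSimplex ℝ S)
    (hP : IsKernel H P) (hP' : IsKernel H P')
    (π π' : ℕ → S → A → ℝ) (hπ : IsPolicy π) (hπ' : IsPolicy π')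
    (D : ℝ) (hD : ∀ h, h < H → ∀ s, l1 (π h s) (π' h s) ≤ D) :
    ∀ h, h < H →
      l1 (dens P μ₁ π (h + 1)) (dens P' μ₁ π' (h + 1)) ≤
        l1 (dens P μ₁ π h) (dens P' μ₁ π' h) + D +
          ∑ s, ∑ a, dens P μ₁ π h s * π h s a *
            l1 (P h s a (dens P μ₁ π h)) (P' h s a (dens P' μ₁ π' h)) := by
  intro h hh
  have hμ := dens_mem_simplex H P μ₁ hμ₁ hP π hπ h (le_of_lt hh)
  have hν := dens_mem_simplex H P' μ₁ hμ₁ hP' π' hπ' h (le_of_lt hh)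
  set μ := dens P μ₁ π h with hμdef
  set ν := dens P' μ₁ π' h with hνdef
  have key : l1 (dens P μ₁ π (h + 1)) (dens P' μ₁ π' (h + 1))
      = ∑ s' : S, |∑ s : S, ∑ a : A,
          ((μ s - ν s) * π' h s a * P' h s a ν s'
           + μ s * (π h s a - π' h s a) * P' h s a ν s'
           + μ s * π h s a * (P h s a μ s' - P' h s a ν s'))| := by
    unfold l1
    refine Finset.sum_congr rfl fun s' _ => ?_
    congr 1
    show (∑ s, ∑ a, μ s * π h s a * P h s a μ s')
        - (∑ s, ∑ a, ν s * π' h s a * P' h s a ν s') = _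
    rw [← Finset.sum_sub_distrib]
    refine Finset.sum_congr rfl fun s _ => ?_
    rw [← Finset.sum_sub_distrib]
    refine Finset.sum_congr rfl fun a _ => ?_
    ring
  have T1 : (∑ s' : S, ∑ s : S, ∑ a : A, |μ s - ν s| * π' h s a * P' h s a ν s')
      = l1 μ ν := by
    rw [Finset.sum_comm]
    unfold l1
    refine Finset.sum_congr rfl fun s _ => ?_
    rw [Finset.sum_comm]
    calc ∑ a, ∑ s' : S, |μ s - ν s| * π' h s a * P' h s a ν s'
        = ∑ a, |μ s - ν s| * π' h s a := by
          refine Finset.sum_congr rfl fun a _ => ?_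
          simp only [mul_assoc]
          rw [← Finset.mul_sum, ← Finset.mul_sum, (hP' h hh s a _ hν).2, mul_one]
      _ = |μ s - ν s| := by rw [← Finset.mul_sum, (hπ' h s).2, mul_one]
  have T2 : (∑ s' : S, ∑ s : S, ∑ a : A,
      μ s * |π h s a - π' h s a| * P' h s a ν s') ≤ D := by
    have e : (∑ s' : S, ∑ s : S, ∑ a : A, μ s * |π h s a - π' h s a| * P' h s a ν s')
        = ∑ s, μ s * l1 (π h s) (π' h s) := by
      rw [Finset.sum_comm]
      refine Finset.sum_congr rfl fun s _ => ?_
      rw [Finset.sum_comm]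
      unfold l1
      rw [Finset.mul_sum]
      refine Finset.sum_congr rfl fun a _ => ?_
      simp only [mul_assoc]
      rw [← Finset.mul_sum, ← Finset.mul_sum, (hP' h hh s a _ hν).2, mul_one]
    rw [e]
    calc ∑ s, μ s * l1 (π h s) (π' h s) ≤ ∑ s, μ s * D :=
          Finset.sum_le_sum fun s _ => mul_le_mul_of_nonneg_left (hD h hh s) (hμ.1 s)
      _ = D := by rw [← Finset.sum_mul, hμ.2, one_mul]
  have T3 : (∑ s' : S, ∑ s : S, ∑ a : A,
      μ s * π h s a * |P h s a μ s' - P' h s a ν s'|)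
      = ∑ s, ∑ a, μ s * π h s a * l1 (P h s a μ) (P' h s a ν) := by
    rw [Finset.sum_comm]
    refine Finset.sum_congr rfl fun s _ => ?_
    rw [Finset.sum_comm]
    refine Finset.sum_congr rfl fun a _ => ?_
    unfold l1
    rw [Finset.mul_sum]
  calc l1 (dens P μ₁ π (h + 1)) (dens P' μ₁ π' (h + 1))
      ≤ ∑ s' : S, ∑ s : S, ∑ a : A,
          (|μ s - ν s| * π' h s a * P' h s a ν s'
           + μ s * |π h s a - π' h s a| * P' h s a ν s'
           + μ s * π h s a * |P h s a μ s' - P' h s a ν s'|) := by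
        rw [key]
        refine Finset.sum_le_sum fun s' _ => ?_
        refine (Finset.abs_sum_le_sum_abs _ _).trans (Finset.sum_le_sum fun s _ => ?_)
        refine (Finset.abs_sum_le_sum_abs _ _).trans (Finset.sum_le_sum fun a _ => ?_)
        have h1 : (0:ℝ) ≤ π' h s a := (hπ' h s).1 a
        have h2 : (0:ℝ) ≤ P' h s a ν s' := (hP' h hh s a _ hν).1 s'
        have h3 : (0:ℝ) ≤ μ s := hμ.1 s
        have h4 : (0:ℝ) ≤ π h s a := (hπ h s).1 a
        refine (abs_add_three _ _ _).trans ?_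
        rw [abs_mul, abs_mul, abs_mul, abs_mul, abs_mul, abs_mul,
            abs_of_nonneg h1, abs_of_nonneg h2, abs_of_nonneg h3, abs_of_nonneg h4]
    _ = (∑ s' : S, ∑ s : S, ∑ a : A, |μ s - ν s| * π' h s a * P' h s a ν s')
        + (∑ s' : S, ∑ s : S, ∑ a : A, μ s * |π h s a - π' h s a| * P' h s a ν s')
        + (∑ s' : S, ∑ s : S, ∑ a : A, μ s * π h s a * |P h s a μ s' - P' h s a ν s'|) := by
          simp [Finset.sum_add_distrib]
    _ ≤ l1 μ ν + D + ∑ s, ∑ a, μ s * π h s a * l1 (P h s a μ) (P' h s a ν) := by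
          rw [T1, T3]; exact add_le_add (add_le_add le_rfl T2) le_rfl
end

section
/- Let M and M' be two mean-field MDPs on the same finite S, A, horizon H and initial distribution μ₁, and let π be a policy. Then for every h ∈ {1,…,H}: (a) ‖μ^π_{M,h+1} − μ^π_{M',h+1}‖₁ ≤ E_{π,M(π)}[Σ_{h'=1}^{h} ‖P_{M,h'}(·|s_{h'},a_{h'},μ^π_{M,h'}) − P_{M',h'}(·|s_{h'},a_{h'},μ^π_{M',h'})‖₁]; and (b) if additionally M' is L_T-Lipschitz in the density argument, i.e., ‖P_{M',h'}(·|s,a,μ) − P_{M',h'}(·|s,a,μ')‖₁ ≤ L_T·‖μ − μ'‖₁ for all h', s, a and all μ, μ' ∈ Δ(S), then ‖μ^π_{M,h+1} − μ^π_{M',h+1}‖₁ ≤ E_{π,M(π)}[Σ_{h'=1}^{h} (1+L_T)^{h−h'}·‖P_{M,h'}(·|s_{h'},a_{h'},μ^π_{M,h'}) − P_{M',h'}(·|s_{h'},a_{h'},μ^π_{M,h'})‖₁]. -/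
/-! One transition step `μ ↦ Σ_{s,a} μ(s) π(a|s) Q(·|s,a)` is an ℓ1-contraction in `μ` for a
fixed stochastic kernel, and changing the kernel at fixed `μ` moves it by at most the expected
ℓ1 kernel change. So the density gap `d_h` obeys `d_{h+1} ≤ d_h + e_h`; when `M'` is
`L_T`-Lipschitz in the density, comparing `P'` at the two models' densities instead gives
`d_{h+1} ≤ (1 + L_T) d_h + e_h`. Unrolling from `d_0 = 0` gives both bounds. -/

open Finset

section Transport

variable {S A : Type*} [Fintype S] [Fintype A]

theorem l1_self (p : S → ℝ) : l1 p p = 0 := by simp [l1]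

theorem l1_triangle (p q r : S → ℝ) : l1 p r ≤ l1 p q + l1 q r := by
  rw [l1, l1, l1, ← sum_add_distrib]
  exact sum_le_sum fun x _ => abs_sub_le _ _ _

def nextLaw (μ : S → ℝ) (π : S → A → ℝ) (Q : S → A → S → ℝ) : S → ℝ :=
  fun s' => ∑ s, ∑ a, μ s * π s a * Q s a s'

theorem sum_sum_mul_eq_one {μ : S → ℝ} {π : S → A → ℝ} (hμ : μ ∈ stdSimplex ℝ S)
    (hπ : ∀ s, π s ∈ stdSimplex ℝ A) : ∑ s, ∑ a, μ s * π s a = 1 := by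
  simp_rw [← mul_sum, fun s => (hπ s).2, mul_one]
  exact hμ.2

theorem sum_nextLaw {μ : S → ℝ} {π : S → A → ℝ} {Q : S → A → S → ℝ}
    (hQ : ∀ s a, ∑ s', Q s a s' = 1) : ∑ s', nextLaw μ π Q s' = ∑ s, ∑ a, μ s * π s a := by
  calc ∑ s', nextLaw μ π Q s' = ∑ s, ∑ a, ∑ s', μ s * π s a * Q s a s' := by
        simp only [nextLaw]
        rw [sum_comm]
        exact sum_congr rfl fun s _ => sum_comm
    _ = ∑ s, ∑ a, μ s * π s a := by simp only [← mul_sum, hQ, mul_one]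

theorem nextLaw_mem_stdSimplex {μ : S → ℝ} {π : S → A → ℝ} {Q : S → A → S → ℝ}
    (hμ : μ ∈ stdSimplex ℝ S) (hπ : ∀ s, π s ∈ stdSimplex ℝ A)
    (hQ : ∀ s a, Q s a ∈ stdSimplex ℝ S) : nextLaw μ π Q ∈ stdSimplex ℝ S :=
  ⟨fun s' => sum_nonneg fun s _ => sum_nonneg fun a _ =>
      mul_nonneg (mul_nonneg (hμ.1 s) ((hπ s).1 a)) ((hQ s a).1 s'),
    (sum_nextLaw fun s a => (hQ s a).2).trans (sum_sum_mul_eq_one hμ hπ)⟩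

theorem l1_nextLaw_le_of_kernel {μ : S → ℝ} {π : S → A → ℝ} (hμ : ∀ s, 0 ≤ μ s)
    (hπ : ∀ s a, 0 ≤ π s a) (Q Q' : S → A → S → ℝ) :
    l1 (nextLaw μ π Q) (nextLaw μ π Q') ≤ ∑ s, ∑ a, μ s * π s a * l1 (Q s a) (Q' s a) := by
  calc l1 (nextLaw μ π Q) (nextLaw μ π Q')
      = ∑ s', |∑ s, ∑ a, μ s * π s a * (Q s a s' - Q' s a s')| := by
        simp only [l1, nextLaw, mul_sub, sum_sub_distrib]
    _ ≤ ∑ s', ∑ s, ∑ a, μ s * π s a * |Q s a s' - Q' s a s'| := by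
        gcongr with s'
        refine (abs_sum_le_sum_abs _ _).trans (sum_le_sum fun s _ => ?_)
        refine (abs_sum_le_sum_abs _ _).trans (sum_le_sum fun a _ => ?_)
        rw [abs_mul, abs_of_nonneg (mul_nonneg (hμ s) (hπ s a))]
    _ = ∑ s, ∑ a, μ s * π s a * l1 (Q s a) (Q' s a) := by
        simp only [l1, mul_sum]
        rw [sum_comm]
        exact sum_congr rfl fun s _ => sum_comm

theorem l1_nextLaw_le_of_law (μ ν : S → ℝ) {π : S → A → ℝ} {Q : S → A → S → ℝ}
    (hπ : ∀ s, π s ∈ stdSimplex ℝ A) (hQ : ∀ s a, Q s a ∈ stdSimplex ℝ S) :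
    l1 (nextLaw μ π Q) (nextLaw ν π Q) ≤ l1 μ ν := by
  calc l1 (nextLaw μ π Q) (nextLaw ν π Q)
      = ∑ s', |∑ s, ∑ a, (μ s - ν s) * π s a * Q s a s'| := by
        simp only [l1, nextLaw, sub_mul, sum_sub_distrib]
    _ ≤ ∑ s', nextLaw (fun s => |μ s - ν s|) π Q s' := by
        gcongr with s'
        refine (abs_sum_le_sum_abs _ _).trans (sum_le_sum fun s _ => ?_)
        refine (abs_sum_le_sum_abs _ _).trans (sum_le_sum fun a _ => ?_)
        rw [abs_mul, abs_mul, abs_of_nonneg ((hπ s).1 a), abs_of_nonneg ((hQ s a).1 s')]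
    _ = l1 μ ν := by
        rw [sum_nextLaw fun s a => (hQ s a).2]
        simp only [l1, ← mul_sum, fun s => (hπ s).2, mul_one]

theorem l1_nextLaw_le {μ ν : S → ℝ} {π : S → A → ℝ} {Q Q' : S → A → S → ℝ}
    (hμ : ∀ s, 0 ≤ μ s) (hπ : ∀ s, π s ∈ stdSimplex ℝ A) (hQ' : ∀ s a, Q' s a ∈ stdSimplex ℝ S) :
    l1 (nextLaw μ π Q) (nextLaw ν π Q') ≤
      l1 μ ν + ∑ s, ∑ a, μ s * π s a * l1 (Q s a) (Q' s a) := by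
  have hsplit := l1_triangle (nextLaw μ π Q) (nextLaw μ π Q') (nextLaw ν π Q')
  have hkernel := l1_nextLaw_le_of_kernel hμ (fun s => (hπ s).1) Q Q'
  have hlaw := l1_nextLaw_le_of_law μ ν hπ hQ'
  linarith

end Transport

theorem le_sum_pow_mul_of_le_mul_add {d e : ℕ → ℝ} {c : ℝ} {n : ℕ} (hc : 0 ≤ c) (h0 : d 0 = 0)
    (hstep : ∀ h < n, d (h + 1) ≤ c * d h + e h) :
    ∀ h < n, d (h + 1) ≤ ∑ k ∈ range (h + 1), c ^ (h - k) * e k := by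
  intro h
  induction h with
  | zero => intro hn; simpa [h0] using hstep 0 hn
  | succ h ih =>
    intro hn
    calc d (h + 2) ≤ c * d (h + 1) + e (h + 1) := hstep (h + 1) hn
      _ ≤ c * ∑ k ∈ range (h + 1), c ^ (h - k) * e k + e (h + 1) := by
        gcongr
        exact ih (by omega)
      _ = ∑ k ∈ range (h + 2), c ^ (h + 1 - k) * e k := by
        rw [sum_range_succ _ (h + 1), mul_sum, Nat.sub_self, pow_zero, one_mul]
        congr 1
        refine sum_congr rfl fun k hk => ?_
        rw [Nat.sub_add_comm (mem_range_succ_iff.mp hk), pow_succ', mul_assoc]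

section MeanFieldMDP

variable {S A : Type*} [Fintype S] [Fintype A] {H : ℕ} {P P' : ℕ → S → A → (S → ℝ) → S → ℝ}
  {μ₁ : S → ℝ} {π : ℕ → S → A → ℝ}

theorem dens_mem_stdSimplex (hμ₁ : μ₁ ∈ stdSimplex ℝ S) (hP : IsKernel H P) (hπ : IsPolicy π) :
    ∀ k ≤ H, dens P μ₁ π k ∈ stdSimplex ℝ S := by
  intro k
  induction k with
  | zero => exact fun _ => hμ₁
  | succ k ih =>
    intro hk
    have hμ := ih (by omega)
    exact nextLaw_mem_stdSimplex hμ (hπ k) fun s a => hP k hk s a _ hμ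

theorem l1_dens_succ_le (hμ₁ : μ₁ ∈ stdSimplex ℝ S) (hP : IsKernel H P) (hP' : IsKernel H P')
    (hπ : IsPolicy π) {h : ℕ} (hh : h < H) :
    l1 (dens P μ₁ π (h + 1)) (dens P' μ₁ π (h + 1)) ≤
      l1 (dens P μ₁ π h) (dens P' μ₁ π h) + ∑ s, ∑ a, dens P μ₁ π h s * π h s a *
        l1 (P h s a (dens P μ₁ π h)) (P' h s a (dens P' μ₁ π h)) :=
  l1_nextLaw_le (dens_mem_stdSimplex hμ₁ hP hπ h hh.le).1 (hπ h)
    fun s a => hP' h hh s a _ (dens_mem_stdSimplex hμ₁ hP' hπ h hh.le)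

theorem l1_dens_succ_le_of_lipschitz (hμ₁ : μ₁ ∈ stdSimplex ℝ S) (hP : IsKernel H P)
    (hP' : IsKernel H P') (hπ : IsPolicy π) {L : ℝ}
    (hLip : ∀ k, k < H → ∀ s a, ∀ μ ∈ stdSimplex ℝ S, ∀ μ' ∈ stdSimplex ℝ S,
      l1 (P' k s a μ) (P' k s a μ') ≤ L * l1 μ μ') {h : ℕ} (hh : h < H) :
    l1 (dens P μ₁ π (h + 1)) (dens P' μ₁ π (h + 1)) ≤
      (1 + L) * l1 (dens P μ₁ π h) (dens P' μ₁ π h) + ∑ s, ∑ a, dens P μ₁ π h s * π h s a *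
        l1 (P h s a (dens P μ₁ π h)) (P' h s a (dens P μ₁ π h)) := by
  set μ := dens P μ₁ π h
  set μ' := dens P' μ₁ π h
  have hμ : μ ∈ stdSimplex ℝ S := dens_mem_stdSimplex hμ₁ hP hπ h hh.le
  have hμ' : μ' ∈ stdSimplex ℝ S := dens_mem_stdSimplex hμ₁ hP' hπ h hh.le
  have hkernel (s : S) (a : A) :
      l1 (P h s a μ) (P' h s a μ') ≤ l1 (P h s a μ) (P' h s a μ) + L * l1 μ μ' :=
    (l1_triangle _ _ _).trans (add_le_add_right (hLip h hh s a μ hμ μ' hμ') _)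
  calc l1 (dens P μ₁ π (h + 1)) (dens P' μ₁ π (h + 1))
      ≤ l1 μ μ' + ∑ s, ∑ a, μ s * π h s a * l1 (P h s a μ) (P' h s a μ') :=
        l1_dens_succ_le hμ₁ hP hP' hπ hh
    _ ≤ l1 μ μ' + ∑ s, ∑ a, μ s * π h s a * (l1 (P h s a μ) (P' h s a μ) + L * l1 μ μ') := by
        gcongr with s _ a
        · exact mul_nonneg (hμ.1 s) ((hπ h s).1 a)
        · exact hkernel s a
    _ = (1 + L) * l1 μ μ' + ∑ s, ∑ a, μ s * π h s a * l1 (P h s a μ) (P' h s a μ) := by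
        simp only [mul_add, sum_add_distrib, ← sum_mul, sum_sum_mul_eq_one hμ (hπ h)]
        ring

end MeanFieldMDP

/-- **Density estimation error.** For two models `M, M'` and a policy `π`,
for every `h < H` (0-indexed; the claim is about `μ^π_{·,h+2}` in 1-indexed notation):
(a) the ℓ1 density difference is bounded by the accumulated expected one-step kernel
differences (each model at its own densities); and
(b) if `M'` is `L_T`-Lipschitz in the density argument, it is also bounded by the
`(1+L_T)^{h−k}`-weighted accumulated kernel differences, both kernels evaluated at `M`'s
densities. -/
theorem density_estimation_error {S A : Type*} [Fintype S] [Fintype A] (H : ℕ)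
    (P P' : ℕ → S → A → (S → ℝ) → S → ℝ) (μ₁ : S → ℝ) (hμ₁ : μ₁ ∈ stdSimplex ℝ S)
    (hP : IsKernel H P) (hP' : IsKernel H P')
    (π : ℕ → S → A → ℝ) (hπ : IsPolicy π) (L_T : ℝ) (hLT : 0 ≤ L_T) :
    (∀ h, h < H →
      l1 (dens P μ₁ π (h + 1)) (dens P' μ₁ π (h + 1)) ≤
        ∑ k ∈ Finset.range (h + 1), ∑ s, ∑ a, dens P μ₁ π k s * π k s a *
          l1 (P k s a (dens P μ₁ π k)) (P' k s a (dens P' μ₁ π k))) ∧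
    ((∀ k, k < H → ∀ s a, ∀ μ ∈ stdSimplex ℝ S, ∀ μ' ∈ stdSimplex ℝ S,
        l1 (P' k s a μ) (P' k s a μ') ≤ L_T * l1 μ μ') →
      ∀ h, h < H →
        l1 (dens P μ₁ π (h + 1)) (dens P' μ₁ π (h + 1)) ≤
          ∑ k ∈ Finset.range (h + 1), (1 + L_T) ^ (h - k) *
            ∑ s, ∑ a, dens P μ₁ π k s * π k s a *
              l1 (P k s a (dens P μ₁ π k)) (P' k s a (dens P μ₁ π k))) := by
  let d k := l1 (dens P μ₁ π k) (dens P' μ₁ π k)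
  have h0 : d 0 = 0 := l1_self μ₁
  constructor
  · intro h hh
    simpa using le_sum_pow_mul_of_le_mul_add (d := d) zero_le_one h0
      (fun k hk => by simpa using l1_dens_succ_le hμ₁ hP hP' hπ hk) h hh
  · intro hLip
    exact le_sum_pow_mul_of_le_mul_add (d := d) (by linarith) h0
      (fun k hk => l1_dens_succ_le_of_lipschitz hμ₁ hP hP' hπ hLip hk)
end
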